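/- arXiv:1512.08031 — 13 statements merged into one kernel-verified Lean document; each statement's English description precedes it below -/
import Mathlib

section
/- Let A be a finite-dimensional real inner product space with a bilinear product compatible with the inner product (i.e., (x·y|z) = (z·x|y)). Then A splits as a direct sum of pairwise orthogonal ideals each of which contains no nonzero proper ideal of A. -/
open scoped InnerProductSpace

/-- `J` is a (two-sided) ideal for the bilinear product `mul`. -/
def IsMulIdeal {A : Type*} [NormedAddCommGroup A] [InnerProductSpace ℝ A]
    (mul : A →ₗ[ℝ] A →ₗ[ℝ] A) (J : Submodule ℝ A) : Prop :=
  ∀ x ∈ J, ∀ y : A, mul x y ∈ J ∧ mul y x ∈ J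

theorem stmt_1 {A : Type*} [NormedAddCommGroup A] [InnerProductSpace ℝ A]
    [FiniteDimensional ℝ A]
    (mul : A →ₗ[ℝ] A →ₗ[ℝ] A)
    (compat : ∀ x y z : A, ⟪mul x y, z⟫_ℝ = ⟪mul z x, y⟫_ℝ) :
    ∃ (m : ℕ) (I : Fin m → Submodule ℝ A),
      (∀ i, IsMulIdeal mul (I i)) ∧
      (∀ i, I i ≠ ⊥) ∧
      (∀ i j, i ≠ j → ∀ x ∈ I i, ∀ y ∈ I j, ⟪x, y⟫_ℝ = 0) ∧
      (⨆ i, I i) = ⊤ ∧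
      (∀ i, ∀ J : Submodule ℝ A, IsMulIdeal mul J → J ≤ I i → J = ⊥ ∨ J = I i) := by
  -- cyclic invariance of the trilinear form
  have hcyc : ∀ x y z : A, ⟪mul x y, z⟫_ℝ = ⟪mul y z, x⟫_ℝ := by
    intro x y z
    rw [compat, compat]
  -- orthogonal complement of an ideal is an ideal
  have horth : ∀ J : Submodule ℝ A, IsMulIdeal mul J → IsMulIdeal mul Jᗮ := by
    intro J hJ x hx y
    constructor
    · rw [Submodule.mem_orthogonal]
      intro u hu
      rw [real_inner_comm, hcyc]
      exact (Submodule.mem_orthogonal J x).mp hx _ (hJ u hu y).2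
    · rw [Submodule.mem_orthogonal]
      intro u hu
      rw [real_inner_comm, compat]
      exact (Submodule.mem_orthogonal J x).mp hx _ (hJ u hu y).1
  -- intersection of ideals is an ideal
  have hinf : ∀ J K : Submodule ℝ A, IsMulIdeal mul J → IsMulIdeal mul K →
      IsMulIdeal mul (J ⊓ K) := by
    intro J K hJ hK x hx y
    exact ⟨⟨(hJ x hx.1 y).1, (hK x hx.2 y).1⟩, ⟨(hJ x hx.1 y).2, (hK x hx.2 y).2⟩⟩
  -- main induction on finrank of an ideal
  have main : ∀ n (K : Submodule ℝ A), Module.finrank ℝ K = n → IsMulIdeal mul K →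
      ∃ (m : ℕ) (I : Fin m → Submodule ℝ A),
        (∀ i, I i ≤ K) ∧
        (∀ i, IsMulIdeal mul (I i)) ∧
        (∀ i, I i ≠ ⊥) ∧
        (∀ i j, i ≠ j → ∀ x ∈ I i, ∀ y ∈ I j, ⟪x, y⟫_ℝ = 0) ∧
        (⨆ i, I i) = K ∧
        (∀ i, ∀ J : Submodule ℝ A, IsMulIdeal mul J → J ≤ I i → J = ⊥ ∨ J = I i) := by
    intro n
    induction n using Nat.strong_induction_on with
    | _ n ih =>
      intro K hrank hK
      by_cases hbot : K = ⊥
      · refine ⟨0, Fin.elim0, fun i => i.elim0, fun i => i.elim0, fun i => i.elim0,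
          fun i => i.elim0, ?_, fun i => i.elim0⟩
        rw [hbot]
        exact iSup_of_empty _
      · -- pick a minimal nonzero ideal contained in K
        obtain ⟨I, ⟨hI_ideal, hI_le, hI_ne⟩, hmin⟩ :=
          (wellFounded_lt (α := Submodule ℝ A)).has_min
            {J | IsMulIdeal mul J ∧ J ≤ K ∧ J ≠ ⊥} ⟨K, hK, le_rfl, hbot⟩
        set K' := Iᗮ ⊓ K with hK'def
        have hK'_ideal : IsMulIdeal mul K' := hinf _ _ (horth I hI_ideal) hK
        have hsup : I ⊔ K' = K := Submodule.sup_orthogonal_inf_of_hasOrthogonalProjection hI_le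
        have hdisj : Disjoint I Iᗮ := Submodule.orthogonal_disjoint I
        have hK'_lt : K' < K := by
          refine lt_of_le_of_ne inf_le_right ?_
          intro h
          apply hI_ne
          have : I ≤ Iᗮ := le_trans (h ▸ hI_le) inf_le_left
          exact (disjoint_self.mp (hdisj.mono_right this))
        obtain ⟨m, I', hI'le, hI'ideal, hI'ne, hI'orth, hI'sup, hI'min⟩ :=
          ih (Module.finrank ℝ K')
            (hrank ▸ Submodule.finrank_lt_finrank_of_lt hK'_lt) K' rfl hK'_ideal
        have hK'_le_orth : K' ≤ Iᗮ := inf_le_left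
        refine ⟨m + 1, Fin.cons I I', ?_, ?_, ?_, ?_, ?_, ?_⟩
        · intro i
          refine i.cases ?_ ?_
          · exact hI_le
          · intro j
            exact le_trans (hI'le j) (le_of_lt hK'_lt)
        · intro i
          refine i.cases hI_ideal hI'ideal
        · intro i
          refine i.cases hI_ne hI'ne
        · intro i j hij x hx y hy
          induction i using Fin.cases with
          | zero =>
            induction j using Fin.cases with
            | zero => exact absurd rfl hij
            | succ j =>
              have : y ∈ Iᗮ := hK'_le_orth (hI'le j hy)
              exact (Submodule.mem_orthogonal I y).mp this x hx
          | succ i =>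
            induction j using Fin.cases with
            | zero =>
              have : x ∈ Iᗮ := hK'_le_orth (hI'le i hx)
              rw [real_inner_comm]
              exact (Submodule.mem_orthogonal I x).mp this y hy
            | succ j =>
              exact hI'orth i j (fun h => hij (by rw [h])) x hx y hy
        · rw [← hsup, ← hI'sup]
          exact le_antisymm (iSup_le (fun i => i.cases le_sup_left
              (fun j => le_trans (le_iSup I' j) le_sup_right)))
            (sup_le (le_iSup (Fin.cons I I') 0)
              (iSup_le fun j => by
                simpa using le_iSup (Fin.cons I I') j.succ))
        · intro i
          refine i.cases ?_ hI'min
          intro J hJ hJle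
          by_cases hJbot : J = ⊥
          · exact Or.inl hJbot
          · right
            have hJmem : J ∈ {J | IsMulIdeal mul J ∧ J ≤ K ∧ J ≠ ⊥} :=
              ⟨hJ, le_trans hJle hI_le, hJbot⟩
            rcases hJle.lt_or_eq with h | h
            · exact absurd h (hmin J hJmem)
            · exact h
  obtain ⟨m, I, _, h1, h2, h3, h4, h5⟩ := main (Module.finrank ℝ (⊤ : Submodule ℝ A)) ⊤ rfl
    (fun x _ y => ⟨trivial, trivial⟩)
  exact ⟨m, I, h1, h2, h3, h4, h5⟩
end

section
/- Let V be a finite-dimensional real inner product space, let v₁,…,v_k ∈ V be nonzero pairwise orthogonal vectors, and define a bilinear product on V by x·y := Σᵢ (vᵢ|x)(vᵢ|y) vᵢ. Then this product is associative: x·(y·z) = (x·y)·z for all x,y,z ∈ V. -/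
open scoped InnerProductSpace

theorem stmt_2 {V : Type*} [NormedAddCommGroup V] [InnerProductSpace ℝ V]
    [FiniteDimensional ℝ V]
    {k : ℕ} (v : Fin k → V)
    (hnz : ∀ i, v i ≠ 0)
    (horth : ∀ i j, i ≠ j → ⟪v i, v j⟫_ℝ = 0)
    (mul : V → V → V)
    (hmul : ∀ x y, mul x y = ∑ i, (⟪v i, x⟫_ℝ * ⟪v i, y⟫_ℝ) • v i) :
    ∀ x y z : V, mul x (mul y z) = mul (mul x y) z := by
  have key : ∀ (i : Fin k) (y z : V),
      ⟪v i, mul y z⟫_ℝ = ⟪v i, y⟫_ℝ * ⟪v i, z⟫_ℝ * ⟪v i, v i⟫_ℝ := by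
    intro i y z
    rw [hmul, inner_sum]
    rw [Finset.sum_eq_single i]
    · rw [real_inner_smul_right]
    · intro j _ hj
      rw [real_inner_smul_right, horth i j (Ne.symm hj), mul_zero]
    · intro h; exact absurd (Finset.mem_univ i) h
  intro x y z
  rw [hmul x (mul y z), hmul (mul x y) z]
  apply Finset.sum_congr rfl
  intro i _
  rw [key i y z, key i x y]
  ring_nf
end

section
/- Let V be a finite-dimensional real inner product space equipped with a commutative bilinear product · satisfying (u·v|w) = (u·w|v) for all u,v,w, and suppose · is associative. Then there exist pairwise orthogonal nonzero vectors v₁,…,v_k ∈ V such that x·y = Σᵢ (vᵢ|x)(vᵢ|y) vᵢ for all x,y ∈ V. -/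
/-!
Associativity and commutativity make the multiplication operators `mul u` pairwise commuting,
and compatibility makes them self-adjoint, so they have a common orthonormal eigenbasis `e`.
For a common eigenvector `e j`, compatibility turns the eigenvalue of `mul x` into
`c j * ⟪e j, x⟫` with `c j = ⟪e j, mul (e j) (e j)⟫`; hence
`mul x y = ∑ j, (c j * ⟪e j, x⟫ * ⟪e j, y⟫) • e j`, and `v j = c j ^ (1/3) • e j` works once the
zero vectors are discarded.
-/

open scoped InnerProductSpace

theorem Real.exists_pow_eq_of_odd {n : ℕ} (hn : Odd n) (c : ℝ) : ∃ t : ℝ, t ^ n = c := by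
  obtain ⟨t, ht⟩ : ∃ t : ℝ, t ^ n = |c| := ⟨|c| ^ (n : ℝ)⁻¹, by
    rw [← Real.rpow_natCast, ← Real.rpow_mul (abs_nonneg c),
      inv_mul_cancel₀ (Nat.cast_ne_zero.mpr hn.pos.ne'), Real.rpow_one]⟩
  rcases abs_choice c with h | h
  · exact ⟨t, ht.trans h⟩
  · exact ⟨-t, by rw [hn.neg_pow, ht, h, neg_neg]⟩

theorem Fintype.exists_embedding_fin_forall_ne_zero {ι M N : Type*} [Fintype ι] [Zero M]
    [AddCommMonoid N] (w : ι → M) :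
    ∃ (k : ℕ) (σ : Fin k ↪ ι), (∀ j, w (σ j) ≠ 0) ∧
      ∀ g : M → N, g 0 = 0 → ∑ i, g (w i) = ∑ j, g (w (σ j)) := by
  classical
  let e := Fintype.equivFin {i // w i ≠ 0}
  refine ⟨_, e.symm.toEmbedding.trans (Function.Embedding.subtype _), fun j => (e.symm j).2,
    fun g hg => ?_⟩
  calc ∑ i, g (w i) = ∑ i : {i // w i ≠ 0}, g (w i) := by
        rw [← Finset.sum_filter_of_ne (p := fun i => w i ≠ 0) fun i _ hi h => hi (by rw [h, hg])]
        exact Finset.sum_subtype _ (by simp) _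
    _ = ∑ j, g (w (e.symm j : ι)) := (e.symm.sum_comp fun i => g (w i)).symm

section InnerProductSpace

variable {𝕜 E : Type*} [RCLike 𝕜] [NormedAddCommGroup E] [InnerProductSpace 𝕜 E]
  [FiniteDimensional 𝕜 E]

theorem OrthogonalFamily.exists_orthonormalBasis_forall_exists_mem {ι : Type*}
    {A : ι → Submodule 𝕜 E} (hA : OrthogonalFamily 𝕜 (fun i => A i) fun i => (A i).subtypeₗᵢ)
    (hA_top : ⨆ i, A i = ⊤) :
    ∃ b : OrthonormalBasis (Fin (Module.finrank 𝕜 E)) 𝕜 E, ∀ a, ∃ i, b a ∈ A i := by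
  classical
  -- only finitely many `A i` are nonzero, and a subordinate basis needs a finite index type
  have : Fintype {i // A i ≠ ⊥} := (Submodule.finite_ne_bot_of_iSupIndep hA.independent).fintype
  have hA_ne_bot := hA.comp (Subtype.val_injective (p := fun i => A i ≠ ⊥))
  have hA_internal : DirectSum.IsInternal fun i : {i // A i ≠ ⊥} => A i :=
    DirectSum.isInternal_ne_bot_iff.mpr <| hA.isInternal_iff.mpr <| by
      rw [hA_top, Submodule.top_orthogonal_eq_bot]
  exact ⟨hA_internal.subordinateOrthonormalBasis rfl hA_ne_bot,
    fun a => ⟨_, hA_internal.subordinateOrthonormalBasis_subordinate rfl a hA_ne_bot⟩⟩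

theorem LinearMap.IsSymmetric.exists_orthonormalBasis_forall_eigenvector {ι : Type*}
    {T : ι → E →ₗ[𝕜] E} (hT : ∀ i, (T i).IsSymmetric) (hC : Pairwise (Function.onFun Commute T)) :
    ∃ b : OrthonormalBasis (Fin (Module.finrank 𝕜 E)) 𝕜 E,
      ∀ i a, ∃ μ : 𝕜, T i (b a) = μ • b a := by
  obtain ⟨b, hb⟩ :=
    (orthogonalFamily_iInf_eigenspaces hT).exists_orthonormalBasis_forall_exists_mem
      (iSup_iInf_eq_top_of_commute hT hC)
  refine ⟨b, fun i a => ?_⟩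
  obtain ⟨χ, hχ⟩ := hb a
  exact ⟨χ i, Module.End.mem_eigenspace_iff.mp ((Submodule.mem_iInf _).mp hχ i)⟩

end InnerProductSpace

section CompatibleProduct

variable {V : Type*} [NormedAddCommGroup V] [InnerProductSpace ℝ V] {mul : V →ₗ[ℝ] V →ₗ[ℝ] V}

theorem isSymmetric_mul (hcompat : ∀ u v w : V, ⟪mul u v, w⟫_ℝ = ⟪mul u w, v⟫_ℝ) (u : V) :
    (mul u).IsSymmetric := fun x y => by
  rw [hcompat, real_inner_comm]

theorem commute_mul (hcomm : ∀ u v : V, mul u v = mul v u)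
    (hassoc : ∀ x y z : V, mul x (mul y z) = mul (mul x y) z) (u v : V) :
    Commute (mul u) (mul v) := LinearMap.ext fun z => by
  rw [Module.End.mul_apply, Module.End.mul_apply, hassoc, hcomm u v, ← hassoc]

variable {ι : Type*} [Fintype ι] {e : OrthonormalBasis ι ℝ V}

theorem mul_orthonormalBasis (hcomm : ∀ u v : V, mul u v = mul v u)
    (hcompat : ∀ u v w : V, ⟪mul u v, w⟫_ℝ = ⟪mul u w, v⟫_ℝ)
    (he : ∀ u j, ∃ μ : ℝ, mul u (e j) = μ • e j) (x : V) (j : ι) :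
    mul x (e j) = (⟪e j, mul (e j) (e j)⟫_ℝ * ⟪e j, x⟫_ℝ) • e j := by
  have eq_inner_smul : ∀ u, mul u (e j) = ⟪e j, mul u (e j)⟫_ℝ • e j := fun u => by
    obtain ⟨μ, hμ⟩ := he u j
    rw [hμ, real_inner_smul_right, real_inner_self_eq_norm_sq, e.orthonormal.1 j, one_pow,
      mul_one]
  rw [eq_inner_smul x, real_inner_comm, hcomm, hcompat]
  conv_lhs => rw [eq_inner_smul (e j), real_inner_smul_left]

theorem mul_eq_sum_orthonormalBasis (hcomm : ∀ u v : V, mul u v = mul v u)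
    (hcompat : ∀ u v w : V, ⟪mul u v, w⟫_ℝ = ⟪mul u w, v⟫_ℝ)
    (he : ∀ u j, ∃ μ : ℝ, mul u (e j) = μ • e j) (x y : V) :
    mul x y = ∑ j, (⟪e j, mul (e j) (e j)⟫_ℝ * ⟪e j, x⟫_ℝ * ⟪e j, y⟫_ℝ) • e j := by
  conv_lhs => rw [← e.sum_repr' y]
  simp only [map_sum, map_smul]
  refine Finset.sum_congr rfl fun j _ => ?_
  rw [mul_orthonormalBasis hcomm hcompat he, smul_smul, mul_comm]

end CompatibleProduct

theorem stmt_3 {V : Type*} [NormedAddCommGroup V] [InnerProductSpace ℝ V]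
    [FiniteDimensional ℝ V]
    (mul : V →ₗ[ℝ] V →ₗ[ℝ] V)
    (hcomm : ∀ u v : V, mul u v = mul v u)
    (hcompat : ∀ u v w : V, ⟪mul u v, w⟫_ℝ = ⟪mul u w, v⟫_ℝ)
    (hassoc : ∀ x y z : V, mul x (mul y z) = mul (mul x y) z) :
    ∃ (k : ℕ) (v : Fin k → V),
      (∀ i, v i ≠ 0) ∧
      (∀ i j, i ≠ j → ⟪v i, v j⟫_ℝ = 0) ∧
      (∀ x y : V, mul x y = ∑ i, (⟪v i, x⟫_ℝ * ⟪v i, y⟫_ℝ) • v i) := by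
  obtain ⟨e, he⟩ := LinearMap.IsSymmetric.exists_orthonormalBasis_forall_eigenvector
    (isSymmetric_mul hcompat) fun u v _ => commute_mul hcomm hassoc u v
  choose t ht using fun j => Real.exists_pow_eq_of_odd (n := 3) (by decide) ⟪e j, mul (e j) (e j)⟫_ℝ
  obtain ⟨k, σ, hσ, hsum⟩ :=
    Fintype.exists_embedding_fin_forall_ne_zero (N := V) fun j => t j • e j
  refine ⟨k, fun i => t (σ i) • e (σ i), hσ, fun i i' hii' => ?_, fun x y => ?_⟩
  · rw [real_inner_smul_left, real_inner_smul_right, e.orthonormal.2 (σ.injective.ne hii'),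
      mul_zero, mul_zero]
  · rw [← hsum (fun v => (⟪v, x⟫_ℝ * ⟪v, y⟫_ℝ) • v) (by simp),
      mul_eq_sum_orthonormalBasis hcomm hcompat he]
    refine Finset.sum_congr rfl fun j _ => ?_
    rw [real_inner_smul_left, real_inner_smul_left, smul_smul, ← ht j]
    ring_nf
end

section
/- Let V be a finite-dimensional complex inner product space, let v₁,…,v_k ∈ V be nonzero pairwise orthogonal vectors, and define the bi-semilinear product x·y := Σᵢ conj((x|vᵢ)) conj((y|vᵢ)) vᵢ (semilinear in each argument). Then for all x,y,z,u ∈ V, x·(y·(z·u)) = z·(y·(x·u)) and (x·y)·(z·u) = (x·u)·(z·y) (semi-associativity). -/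
open scoped InnerProductSpace

/-- The inner product `⟪x, v⟫_ℂ` (Mathlib convention: conjugate-linear in the first
argument) equals the conjugate of the pairing `(x|v)` that is linear in `x`; so the
bi-semilinear product of the paper is `x · y = ∑ i ⟪x, vᵢ⟫ ⟪y, vᵢ⟫ • vᵢ`. -/
theorem stmt_9 {V : Type*} [NormedAddCommGroup V] [InnerProductSpace ℂ V]
    [FiniteDimensional ℂ V]
    {k : ℕ} (v : Fin k → V)
    (hnz : ∀ i, v i ≠ 0)
    (horth : ∀ i j, i ≠ j → ⟪v i, v j⟫_ℂ = 0)
    (mul : V → V → V)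
    (hmul : ∀ x y, mul x y = ∑ i, (⟪x, v i⟫_ℂ * ⟪y, v i⟫_ℂ) • v i) :
    (∀ x y z u : V, mul x (mul y (mul z u)) = mul z (mul y (mul x u))) ∧
    (∀ x y z u : V, mul (mul x y) (mul z u) = mul (mul x u) (mul z y)) := by
  have key : ∀ (c : Fin k → ℂ) (i : Fin k),
      ⟪∑ j, c j • v j, v i⟫_ℂ = (starRingEnd ℂ) (c i) * ⟪v i, v i⟫_ℂ := by
    intro c i
    rw [sum_inner]
    rw [Finset.sum_eq_single i]
    · rw [inner_smul_left]
    · intro j _ hj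
      rw [inner_smul_left, horth j i hj, mul_zero]
    · intro h; exact absurd (Finset.mem_univ i) h
  have hconj : ∀ i : Fin k, (starRingEnd ℂ) ⟪v i, v i⟫_ℂ = ⟪v i, v i⟫_ℂ := by
    intro i; rw [inner_conj_symm]
  have hin : ∀ (x y : V) (i : Fin k),
      ⟪mul x y, v i⟫_ℂ =
        (starRingEnd ℂ) ⟪x, v i⟫_ℂ * (starRingEnd ℂ) ⟪y, v i⟫_ℂ * ⟪v i, v i⟫_ℂ := by
    intro x y i
    rw [hmul, key, map_mul]
  constructor
  · intro x y z u
    rw [hmul x (mul y (mul z u)), hmul z (mul y (mul x u))]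
    refine Finset.sum_congr rfl fun i _ => ?_
    congr 1
    simp only [hin, map_mul, Complex.conj_conj, hconj]
    ring
  · intro x y z u
    rw [hmul (mul x y) (mul z u), hmul (mul x u) (mul z y)]
    refine Finset.sum_congr rfl fun i _ => ?_
    congr 1
    simp only [hin, map_mul, Complex.conj_conj, hconj]
    ring
end

section
/- Let V be a finite-dimensional complex vector space with a commutative bi-semilinear product · satisfying semi-associativity x·(y·(z·u)) = z·(y·(x·u)), compatibility (u·v|w) = (u·w|v) with a Hermitian inner product, simplicity (no nonzero proper ideals), and nonzero multiplication. Then every left-multiplication map M_x (x ≠ 0) is injective, and V is one-dimensional. -/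
open scoped InnerProductSpace ComplexConjugate

/-!
Write the product as a map `B : V →ₗ⋆[ℂ] V →ₗ⋆[ℂ] V`. Compatibility makes `B x ∘ B x` a symmetric
operator, so it has a real eigenvalue, and semi-associativity makes the corresponding eigenspace
an ideal; by simplicity `B x ∘ B x` is a scalar. Compatibility also gives
`⟪B x (B x v), v⟫ = ‖B x v‖²`, and the annihilator is an ideal, hence zero; so for `x ≠ 0` the
scalar is nonzero and `B x` is injective. Polarization makes every `B x ∘ B y` a scalar `d`, and if
`B x ∘ B x = a • id` with `a ≠ 0`, then `B x ∘ B (w - (d / a) • x) = 0` forces `w ∈ ℂ ∙ x`.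
-/

namespace Bisemilinear

open Module Module.End

section Module

variable {V : Type*} [AddCommGroup V] [Module ℂ V] (B : V →ₗ⋆[ℂ] V →ₗ⋆[ℂ] V)

def IsIdeal (I : Submodule ℂ V) : Prop := ∀ x ∈ I, ∀ y, B x y ∈ I

def IsSimple : Prop := ∀ I : Submodule ℂ V, IsIdeal B I → I = ⊥ ∨ I = ⊤

variable {B}

lemma isIdeal_ker (hcomm : ∀ x y, B x y = B y x) : IsIdeal B (LinearMap.ker B) := by
  intro z hz y
  ext w
  rw [hcomm, LinearMap.mem_ker.mp hz, LinearMap.zero_apply, map_zero, LinearMap.zero_apply]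

lemma ker_eq_bot (hcomm : ∀ x y, B x y = B y x) (hsimple : IsSimple B) (hB : B ≠ 0) :
    LinearMap.ker B = ⊥ :=
  (hsimple _ (isIdeal_ker hcomm)).resolve_right fun h => hB (LinearMap.ker_eq_top.mp h)

lemma isIdeal_eigenspace (hcomm : ∀ x y, B x y = B y x)
    (hsemiassoc : ∀ x y z u, B x (B y (B z u)) = B z (B y (B x u))) (x : V) {μ : ℂ}
    (hμ : conj μ = μ) : IsIdeal B (eigenspace ((B x).comp (B x)) μ) := by
  intro w hw y
  rw [mem_eigenspace_iff, LinearMap.comp_apply] at hw ⊢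
  rw [hcomm w y, hsemiassoc, hw, map_smulₛₗ, hμ]

lemma injective_of_comp_self_eq_smul_id {f : V →ₗ⋆[ℂ] V} {c : ℂ}
    (hc : f.comp f = c • LinearMap.id) (hc0 : c ≠ 0) : Function.Injective f := by
  refine Function.Injective.of_comp (f := f) ?_
  rw [← LinearMap.coe_comp, hc]
  exact smul_right_injective V hc0

lemma exists_comp_eq_smul_id (h : ∀ x, ∃ c : ℂ, (B x).comp (B x) = c • LinearMap.id)
    (x y : V) : ∃ c : ℂ, (B x).comp (B y) = c • LinearMap.id := by
  obtain ⟨a, ha⟩ := h x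
  obtain ⟨b, hb⟩ := h y
  obtain ⟨s, hs⟩ := h (x + y)
  obtain ⟨t, ht⟩ := h (x + Complex.I • y)
  -- `B (x + y)²` and `B (x + i y)²` yield `B x B y + B y B x` and `i (B x B y - B y B x)`.
  refine ⟨((s - a - b) - Complex.I * (t - a - b)) / 2, LinearMap.ext fun v => ?_⟩
  replace ha := LinearMap.congr_fun ha v
  replace hb := LinearMap.congr_fun hb v
  replace hs := LinearMap.congr_fun hs v
  replace ht := LinearMap.congr_fun ht v
  simp only [LinearMap.comp_apply, LinearMap.id_apply, LinearMap.smul_apply, map_add, map_smulₛₗ,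
    LinearMap.add_apply, map_neg, Complex.conj_I, neg_neg] at ha hb hs ht ⊢
  linear_combination (norm := match_scalars)
    (1 / 2 : ℂ) • (hs - ha - hb) - (Complex.I / 2) • (ht - ha - hb)
    <;> (ring_nf; try simp only [Complex.I_sq, Complex.I_pow_three]; ring)

lemma finrank_eq_one (hker : LinearMap.ker B = ⊥)
    (hscalar : ∀ x y, ∃ c : ℂ, (B x).comp (B y) = c • LinearMap.id) {x : V} (hx : x ≠ 0)
    {a : ℂ} (ha : (B x).comp (B x) = a • LinearMap.id) (ha0 : a ≠ 0) : finrank ℂ V = 1 := by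
  rw [finrank_eq_one_iff_of_nonzero' x hx]
  intro w
  obtain ⟨d, hd⟩ := hscalar x w
  refine ⟨d / a, ?_⟩
  have hz : (B x).comp (B (w - (d / a) • x)) = 0 := by
    ext v
    have hdv := LinearMap.congr_fun hd v
    have hav := LinearMap.congr_fun ha v
    simp only [LinearMap.comp_apply] at hdv hav
    simp [map_sub, map_smulₛₗ, hdv, hav, smul_smul, div_mul_cancel₀ _ ha0]
  have hBz : B (w - (d / a) • x) = 0 := by
    ext v
    apply injective_of_comp_self_eq_smul_id ha ha0
    rw [LinearMap.zero_apply, map_zero, ← LinearMap.comp_apply, hz, LinearMap.zero_apply]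
  have hmem := LinearMap.mem_ker.mpr hBz
  rw [hker, Submodule.mem_bot, sub_eq_zero] at hmem
  exact hmem.symm

end Module

section InnerProductSpace

variable {V : Type*} [NormedAddCommGroup V] [InnerProductSpace ℂ V]
  {B : V →ₗ⋆[ℂ] V →ₗ⋆[ℂ] V}

lemma isSymmetric_comp_self (hcompat : ∀ u v w, ⟪B u v, w⟫_ℂ = ⟪B u w, v⟫_ℂ) (x : V) :
    ((B x).comp (B x)).IsSymmetric := by
  intro v w
  rw [LinearMap.comp_apply, LinearMap.comp_apply, hcompat, ← inner_conj_symm v,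
    hcompat x (B x w), inner_conj_symm]

lemma exists_comp_self_eq_smul_id [FiniteDimensional ℂ V] (hcomm : ∀ x y, B x y = B y x)
    (hcompat : ∀ u v w, ⟪B u v, w⟫_ℂ = ⟪B u w, v⟫_ℂ)
    (hsemiassoc : ∀ x y z u, B x (B y (B z u)) = B z (B y (B x u))) (hsimple : IsSimple B)
    (x : V) : ∃ c : ℂ, (B x).comp (B x) = c • LinearMap.id := by
  cases subsingleton_or_nontrivial V
  · exact ⟨0, Subsingleton.elim _ _⟩
  obtain ⟨μ, hμ⟩ := exists_eigenvalue ((B x).comp (B x))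
  have hreal := (isSymmetric_comp_self hcompat x).conj_eigenvalue_eq_self hμ
  have htop := (hsimple _ (isIdeal_eigenspace hcomm hsemiassoc x hreal)).resolve_left
    (hasEigenvalue_iff.mp hμ)
  exact ⟨μ, LinearMap.ext fun v => mem_eigenspace_iff.mp (htop ▸ Submodule.mem_top)⟩

lemma comp_self_ne_zero (hcompat : ∀ u v w, ⟪B u v, w⟫_ℂ = ⟪B u w, v⟫_ℂ)
    (hker : LinearMap.ker B = ⊥) {x : V} (hx : x ≠ 0) : (B x).comp (B x) ≠ 0 := by
  obtain ⟨v, hv⟩ : ∃ v, B x v ≠ 0 := by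
    by_contra! h
    exact hx (by rw [← Submodule.mem_bot ℂ, ← hker]; exact LinearMap.ext h)
  intro h0
  have h := hcompat x (B x v) v
  rw [← LinearMap.comp_apply, h0, LinearMap.zero_apply, inner_zero_left, eq_comm,
    inner_self_eq_zero] at h
  exact hv h

end InnerProductSpace

end Bisemilinear

open Bisemilinear

theorem stmt_10 {V : Type*} [NormedAddCommGroup V] [InnerProductSpace ℂ V]
    [FiniteDimensional ℂ V]
    (mul : V → V → V)
    (haddl : ∀ x x' y : V, mul (x + x') y = mul x y + mul x' y)
    (haddr : ∀ x y y' : V, mul x (y + y') = mul x y + mul x y')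
    (hsmull : ∀ (c : ℂ) (x y : V), mul (c • x) y = conj c • mul x y)
    (hsmulr : ∀ (c : ℂ) (x y : V), mul x (c • y) = conj c • mul x y)
    (hcomm : ∀ x y : V, mul x y = mul y x)
    (hcompat : ∀ u v w : V, ⟪mul u v, w⟫_ℂ = ⟪mul u w, v⟫_ℂ)
    (hsemiassoc : ∀ x y z u : V, mul x (mul y (mul z u)) = mul z (mul y (mul x u)))
    (hsimple : ∀ I : Submodule ℂ V, (∀ x ∈ I, ∀ y : V, mul x y ∈ I) → I = ⊥ ∨ I = ⊤)
    (hnonzero : ∃ x y : V, mul x y ≠ 0) :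
    (∀ x : V, x ≠ 0 → Function.Injective (mul x)) ∧ Module.finrank ℂ V = 1 := by
  let B : V →ₗ⋆[ℂ] V →ₗ⋆[ℂ] V :=
    LinearMap.mk₂'ₛₗ (starRingEnd ℂ) (starRingEnd ℂ) mul haddl hsmull haddr hsmulr
  obtain ⟨x₀, y₀, hxy₀⟩ := hnonzero
  have hker : LinearMap.ker B = ⊥ :=
    ker_eq_bot (B := B) hcomm hsimple fun h => hxy₀ (LinearMap.congr_fun₂ h x₀ y₀)
  have hsq := exists_comp_self_eq_smul_id (B := B) hcomm hcompat hsemiassoc hsimple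
  have hunit : ∀ x ≠ 0, ∃ c : ℂ, c ≠ 0 ∧ (B x).comp (B x) = c • LinearMap.id := fun x hx => by
    obtain ⟨c, hc⟩ := hsq x
    refine ⟨c, ?_, hc⟩
    rintro rfl
    exact comp_self_ne_zero hcompat hker hx (by rw [hc, zero_smul])
  refine ⟨fun x hx => ?_, ?_⟩
  · obtain ⟨c, hc0, hc⟩ := hunit x hx
    exact injective_of_comp_self_eq_smul_id hc hc0
  · have : Nontrivial V := nontrivial_of_ne _ _ hxy₀
    obtain ⟨x, hx⟩ := exists_ne (0 : V)
    obtain ⟨c, hc0, hc⟩ := hunit x hx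
    exact finrank_eq_one hker (exists_comp_eq_smul_id hsq) hx hc hc0
end

section
/- Let V be a finite-dimensional commutative (not necessarily associative) division algebra over ℂ: a complex bilinear commutative product * such that for every nonzero v' and every v'' there is v with v*v' = v''. Then dim_ℂ V = 1. -/
theorem stmt_11 {V : Type*} [AddCommGroup V] [Module ℂ V]
    [FiniteDimensional ℂ V] [Nontrivial V]
    (mul : V →ₗ[ℂ] V →ₗ[ℂ] V)
    (hcomm : ∀ x y : V, mul x y = mul y x)
    (hdiv : ∀ v' : V, v' ≠ 0 → ∀ v'' : V, ∃ v : V, mul v v' = v'') :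
    Module.finrank ℂ V = 1 := by
  -- left multiplication by a nonzero element is surjective, hence bijective
  have hsurj : ∀ v : V, v ≠ 0 → Function.Surjective (mul.flip v) := by
    intro v hv w
    obtain ⟨u, hu⟩ := hdiv v hv w
    exact ⟨u, hu⟩
  have hbij : ∀ v : V, v ≠ 0 → Function.Bijective (mul.flip v) := by
    intro v hv
    have hs := hsurj v hv
    exact ⟨(LinearMap.injective_iff_surjective).mpr hs, hs⟩
  -- commutativity: mul x = mul.flip x
  have hflip : ∀ x y : V, mul.flip x y = mul x y := by
    intro x y; simp [LinearMap.flip_apply, hcomm]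
  obtain ⟨x, hx⟩ := exists_ne (0 : V)
  apply finrank_eq_one x hx
  intro y
  -- the invertible operator L_x
  let g : V ≃ₗ[ℂ] V := LinearEquiv.ofBijective (mul.flip x) (hbij x hx)
  -- f = L_x⁻¹ ∘ L_y
  let f : Module.End ℂ V := g.symm.toLinearMap ∘ₗ mul.flip y
  obtain ⟨c, hc⟩ := Module.End.exists_eigenvalue f
  obtain ⟨w, hw⟩ := hc.exists_hasEigenvector
  have hw0 : w ≠ 0 := hw.right
  have heig : g.symm (mul.flip y w) = c • w := hw.apply_eq_smul
  have h1 : mul.flip y w = c • mul.flip x w := by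
    have := congrArg g heig
    rw [LinearEquiv.apply_symm_apply] at this
    rw [this]
    simp [g, LinearEquiv.ofBijective_apply]
  -- hence mul w (y - c • x) = 0
  have h2 : mul w (y - c • x) = 0 := by
    have : mul y w - c • mul x w = 0 := by
      rw [← hflip, ← hflip, h1]; simp
    rw [map_sub, map_smul, hcomm w y, hcomm w x]
    exact this
  have hinj := (hbij w hw0).injective
  have h3 : mul.flip w (y - c • x) = mul.flip w 0 := by
    rw [hflip, hflip, h2, map_zero]
  have := hinj h3
  refine ⟨c, ?_⟩
  exact (sub_eq_zero.mp this).symm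
end

section
/- Let V be a real or complex inner product space with an antisymmetric bracket [·,·] (bilinear if real, bi-semilinear if complex) that is compatible with the inner product (([a,b]|c) = −([a,c]|b)) and satisfies the second cross product identity [[[a,b],c],[d,e]] = [a,[[b,[c,d]],e]] + [a,[[b,[e,c]],d]] + [b,[[a,[d,e]],c]]. If a,b,c ∈ V satisfy [a,c] = [b,c] = 0, then [[a,b],c] = 0. -/
open scoped InnerProductSpace

theorem stmt_12 {𝕜 : Type*} [RCLike 𝕜] {V : Type*} [NormedAddCommGroup V]
    [InnerProductSpace 𝕜 V]
    (B : V → V → V)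
    (hanti : ∀ a b : V, B a b = -B b a)
    (hcompat : ∀ a b c : V, (⟪B a b, c⟫_𝕜 : 𝕜) = -⟪B a c, b⟫_𝕜)
    (hcross2 : ∀ a b c d e : V,
      B (B (B a b) c) (B d e)
        = B a (B (B b (B c d)) e) + B a (B (B b (B e c)) d) + B b (B (B a (B d e)) c))
    (a b c : V) (hac : B a c = 0) (hbc : B b c = 0) :
    B (B a b) c = 0 := by
  -- B x 0 = 0
  have hB0 : ∀ x : V, B x 0 = 0 := by
    intro x
    have h : (⟪B x 0, B x 0⟫_𝕜 : 𝕜) = 0 := by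
      rw [hcompat]; simp
    exact inner_self_eq_zero.mp h
  have h0B : ∀ x : V, B 0 x = 0 := by
    intro x
    rw [hanti, hB0, neg_zero]
  -- cyclic invariance ⟪B x y, w⟫ = ⟪B w x, y⟫
  have hcyc : ∀ x y w : V, (⟪B x y, w⟫_𝕜 : 𝕜) = ⟪B w x, y⟫_𝕜 := by
    intro x y w
    rw [hcompat, hanti x w, inner_neg_left, neg_neg]
  set z := B (B a b) c with hz
  have hkey : B z (B a b) = B b (B (B a (B a b)) c) := by
    have h := hcross2 a b c a b
    rw [← hz] at h
    have hca : B c a = 0 := by rw [hanti, hac, neg_zero]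
    rw [hca, hB0, h0B, hB0, hbc, hB0, h0B, hB0] at h
    simpa using h
  have hzz : (⟪z, z⟫_𝕜 : 𝕜) = 0 := by
    calc (⟪z, z⟫_𝕜 : 𝕜) = ⟪B (B a b) c, z⟫_𝕜 := by rw [← hz]
    _ = ⟪B z (B a b), c⟫_𝕜 := hcyc _ _ _
    _ = ⟪B b (B (B a (B a b)) c), c⟫_𝕜 := by rw [hkey]
    _ = ⟪B c b, B (B a (B a b)) c⟫_𝕜 := hcyc _ _ _
    _ = 0 := by rw [hanti c b, hbc, neg_zero, inner_zero_left]
  exact inner_self_eq_zero.mp hzz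
end

section
/- Let k ≥ 1 and d ≥ 3 be natural numbers, and let A = (id, τ₂, …, τ_d) ∈ (S_k)^d be a d-tuple of permutations of {1,…,k} whose first entry is the identity. Suppose that for every π ∈ S_d there exists σ ∈ S_k with (σ∘τ_{π(1)}, …, σ∘τ_{π(d)}) = (id, τ₂, …, τ_d) — i.e., σ·A = A·π for the diagonal left action of S_k and the right permutation action of S_d. Then τⱼ = id for all j. -/
theorem stmt_14 {k d : ℕ} (hk : 1 ≤ k) (hd : 3 ≤ d)
    (τ : Fin d → Equiv.Perm (Fin k))
    (h0 : τ ⟨0, by omega⟩ = 1)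
    (hA : ∀ π : Equiv.Perm (Fin d), ∃ σ : Equiv.Perm (Fin k),
      ∀ j : Fin d, σ * τ (π j) = τ j) :
    ∀ j, τ j = 1 := by
  intro j
  set z : Fin d := ⟨0, by omega⟩ with hz
  by_cases hj : j = z
  · rw [hj]; exact h0
  · have hjz : j ≠ z := hj
    set m : Fin d := if (j : ℕ) = 1 then ⟨2, by omega⟩ else ⟨1, by omega⟩ with hm
    have hmz : m ≠ z := by
      rw [hm]; split <;> simp [hz, Fin.ext_iff]
    have hmj : m ≠ j := by
      rw [hm]; split
      · rename_i h; simp [Fin.ext_iff]; omega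
      · rename_i h; simp [Fin.ext_iff]; omega
    -- swap z j gives τ j * τ j = 1 (not strictly needed), and σ = τ j
    obtain ⟨σ, hσ⟩ := hA (Equiv.swap z j)
    have e1 := hσ z
    have e2 := hσ j
    rw [Equiv.swap_apply_left] at e1
    rw [Equiv.swap_apply_right] at e2
    rw [h0] at e2
    rw [show τ z = 1 from h0] at e1
    rw [mul_one] at e2
    -- e1 : σ * τ j = 1, e2 : σ = τ j, so τ j * τ j = 1
    have hsq : τ j * τ j = 1 := by rw [e2] at e1; exact e1
    -- 3-cycle: π z = j, π j = m, π m = z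
    obtain ⟨ρ, hρ⟩ := hA (Equiv.swap z m * Equiv.swap z j)
    have f1 := hρ z
    have f2 := hρ j
    have f3 := hρ m
    simp only [Equiv.Perm.mul_apply] at f1 f2 f3
    rw [Equiv.swap_apply_left, Equiv.swap_apply_of_ne_of_ne hjz hmj.symm,
      show τ z = 1 from h0] at f1
    -- f1 : ρ * τ j = 1
    rw [Equiv.swap_apply_right, Equiv.swap_apply_left] at f2
    -- f2 : ρ * τ m = τ j
    rw [Equiv.swap_apply_of_ne_of_ne hmz hmj,
      Equiv.swap_apply_right, show τ z = 1 from h0, mul_one] at f3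
    -- f3 : ρ = τ m
    -- from f1 and hsq: ρ = (τ j)⁻¹ = τ j
    have hρj : ρ = τ j := by
      have : ρ = (τ j)⁻¹ := by
        rw [eq_inv_iff_mul_eq_one]; exact f1
      rw [this, inv_eq_iff_mul_eq_one.mpr hsq]
    have hτm : τ m = 1 := by
      have := f2
      rw [hρj] at this
      have := mul_left_cancel (a := τ j) (b := τ m) (c := 1) (by rw [mul_one]; exact this)
      exact this
    rw [← f3, hρj] at hτm
    exact hτm
end

section
/- Let V be a finite-dimensional real inner product space, d ≥ 3, and suppose T ∈ V^{⊗d} is a nonzero tensor admitting a decomposition T = Σᵢ v_{i1} ⊗ ⋯ ⊗ v_{id} with, for each slot j, the vectors v_{1j},…,v_{kj} nonzero and pairwise orthogonal. If furthermore T is symmetric (invariant under all permutations of tensor factors), then T = Σᵢ ± wᵢ^{⊗d} for some nonzero pairwise orthogonal vectors w₁,…,w_k, i.e., T is symmetrically odeco. -/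
open scoped InnerProductSpace TensorProduct


noncomputable def contr {V : Type*} [NormedAddCommGroup V] [InnerProductSpace ℝ V]
    {d : ℕ} (u : Fin d → V) : (⨂[ℝ] _i : Fin d, V) →ₗ[ℝ] ℝ :=
  PiTensorProduct.lift ((MultilinearMap.mkPiAlgebra ℝ (Fin d) ℝ).compLinearMap
    (fun j => (innerSL ℝ (u j)).toLinearMap))

theorem contr_tprod {V : Type*} [NormedAddCommGroup V] [InnerProductSpace ℝ V]
    {d : ℕ} (u f : Fin d → V) : contr u (⨂ₜ[ℝ] j, f j) = ∏ j, ⟪u j, f j⟫_ℝ := by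
  simp [contr]

theorem key {V : Type*} [NormedAddCommGroup V] [InnerProductSpace ℝ V]
    {d k : ℕ} (hd : 3 ≤ d) (v : Fin k → Fin d → V)
    (hnz : ∀ i j, v i j ≠ 0)
    (horth : ∀ j, ∀ i i', i ≠ i' → ⟪v i j, v i' j⟫_ℝ = 0)
    (i : Fin k) (a b : Fin d) (hab : a ≠ b)
    (hre : (∑ l, ⨂ₜ[ℝ] j : Fin d, v l (Equiv.swap a b j)) = ∑ l, ⨂ₜ[ℝ] j : Fin d, v l j) :
    ∃ t : ℝ, t ≠ 0 ∧ v i a = t • v i b := by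
  have hpos : ∀ x : V, x ≠ 0 → 0 < ⟪x, x⟫_ℝ := fun x hx =>
    lt_of_le_of_ne real_inner_self_nonneg (Ne.symm (inner_self_ne_zero.2 hx))
  -- find c ∉ {a, b}
  obtain ⟨c, hc⟩ : ∃ c : Fin d, c ∉ ({a, b} : Finset (Fin d)) := by
    have h2 : ({a, b} : Finset (Fin d)).card ≤ 2 := Finset.card_insert_le _ _ |>.trans (by simp)
    by_contra h
    push_neg at h
    have : (Finset.univ : Finset (Fin d)).card ≤ 2 := by
      refine le_trans (Finset.card_le_card fun x _ => h x) h2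
    simp [Fintype.card_fin] at this
    omega
  simp only [Finset.mem_insert, Finset.mem_singleton, not_or] at hc
  obtain ⟨hca, hcb⟩ := hc
  set Q : ℝ := ∏ j ∈ (Finset.univ.erase a).erase b, ⟪v i j, v i j⟫_ℝ with hQ
  have hQpos : 0 < Q := Finset.prod_pos fun j _ => hpos _ (hnz i j)
  set A : ℝ := ⟪v i b, v i a⟫_ℝ * Q with hA
  set B : ℝ := ⟪v i b, v i b⟫_ℝ * Q with hB
  have hBpos : 0 < B := mul_pos (hpos _ (hnz i b)) hQpos
  have main : ∀ y : V, ⟪y, v i b⟫_ℝ * A = ⟪y, v i a⟫_ℝ * B := by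
    intro y
    set u : Fin d → V := Function.update (v i) a y with hu
    have e1 : u a = y := Function.update_self _ _ _
    have e3 : ∀ j, j ≠ a → u j = v i j := fun j hj => Function.update_of_ne hj _ _
    have e2 : u b = v i b := e3 b (Ne.symm hab)
    have hcong := congrArg (contr u) hre
    rw [map_sum, map_sum] at hcong
    simp only [contr_tprod] at hcong
    have hL : ∑ l, ∏ j, ⟪u j, v l (Equiv.swap a b j)⟫_ℝ
        = ⟪y, v i b⟫_ℝ * A := by
      rw [Finset.sum_eq_single i]
      · rw [← Finset.mul_prod_erase _ _ (Finset.mem_univ a),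
          ← Finset.mul_prod_erase _ _ (Finset.mem_erase.2 ⟨hab.symm, Finset.mem_univ b⟩)]
        rw [e1, e2, Equiv.swap_apply_left, Equiv.swap_apply_right]
        have : ∏ j ∈ (Finset.univ.erase a).erase b, ⟪u j, v i (Equiv.swap a b j)⟫_ℝ = Q := by
          apply Finset.prod_congr rfl
          intro j hj
          simp only [Finset.mem_erase] at hj
          rw [e3 j hj.2.1, Equiv.swap_apply_of_ne_of_ne hj.2.1 hj.1]
        rw [this, hA]
      · intro l _ hl
        apply Finset.prod_eq_zero (Finset.mem_univ c)
        rw [e3 c hca, Equiv.swap_apply_of_ne_of_ne hca hcb]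
        exact horth c i l (Ne.symm hl)
      · simp
    have hR : ∑ l, ∏ j, ⟪u j, v l j⟫_ℝ = ⟪y, v i a⟫_ℝ * B := by
      rw [Finset.sum_eq_single i]
      · rw [← Finset.mul_prod_erase _ _ (Finset.mem_univ a),
          ← Finset.mul_prod_erase _ _ (Finset.mem_erase.2 ⟨hab.symm, Finset.mem_univ b⟩)]
        rw [e1, e2]
        have : ∏ j ∈ (Finset.univ.erase a).erase b, ⟪u j, v i j⟫_ℝ = Q := by
          apply Finset.prod_congr rfl
          intro j hj
          simp only [Finset.mem_erase] at hj
          rw [e3 j hj.2.1]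
        rw [this, hB]
      · intro l _ hl
        apply Finset.prod_eq_zero (Finset.mem_univ b)
        rw [e2]
        exact horth b i l (Ne.symm hl)
      · simp
    rw [hL, hR] at hcong
    exact hcong
  have hvec : A • v i b - B • v i a = 0 := by
    have h0 : ∀ y : V, ⟪y, A • v i b - B • v i a⟫_ℝ = 0 := by
      intro y
      rw [inner_sub_right, real_inner_smul_right, real_inner_smul_right]
      linarith [main y]
    have := h0 (A • v i b - B • v i a)
    rwa [real_inner_self_eq_norm_sq, pow_eq_zero_iff (two_ne_zero), norm_eq_zero] at this
  have hba : B • v i a = A • v i b := (sub_eq_zero.1 hvec).symm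
  have hva : v i a = (B⁻¹ * A) • v i b := by
    have := congrArg (fun x => B⁻¹ • x) hba
    simpa [smul_smul, inv_mul_cancel₀ hBpos.ne'] using this
  refine ⟨B⁻¹ * A, ?_, hva⟩
  intro h0
  rw [h0, zero_smul] at hva
  exact hnz i a hva

theorem stmt_15 {V : Type*} [NormedAddCommGroup V] [InnerProductSpace ℝ V]
    [FiniteDimensional ℝ V]
    {d : ℕ} (hd : 3 ≤ d)
    (T : ⨂[ℝ] _i : Fin d, V) (hT : T ≠ 0)
    {k : ℕ} (v : Fin k → Fin d → V)
    (hnz : ∀ i j, v i j ≠ 0)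
    (horth : ∀ j, ∀ i i', i ≠ i' → ⟪v i j, v i' j⟫_ℝ = 0)
    (hdec : T = ∑ i, ⨂ₜ[ℝ] j, v i j)
    (hsym : ∀ e : Equiv.Perm (Fin d),
      PiTensorProduct.reindex ℝ (fun _ : Fin d => V) e T = T) :
    ∃ (w : Fin k → V) (ε : Fin k → ℝ),
      (∀ i, ε i = 1 ∨ ε i = -1) ∧
      (∀ i, w i ≠ 0) ∧
      (∀ i i', i ≠ i' → ⟪w i, w i'⟫_ℝ = 0) ∧
      T = ∑ i, ε i • ⨂ₜ[ℝ] _j : Fin d, w i := by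
  have hre : ∀ a b : Fin d, a ≠ b →
      (∑ l, ⨂ₜ[ℝ] j : Fin d, v l (Equiv.swap a b j)) = ∑ l, ⨂ₜ[ℝ] j : Fin d, v l j := by
    intro a b hab
    have h := hsym (Equiv.swap a b)
    rw [hdec] at h
    rw [map_sum] at h
    simpa [PiTensorProduct.reindex_tprod] using h
  set j0 : Fin d := ⟨0, by omega⟩ with hj0
  have hpar : ∀ i j, ∃ t : ℝ, t ≠ 0 ∧ v i j = t • v i j0 := by
    intro i j
    by_cases hj : j = j0
    · exact ⟨1, one_ne_zero, by rw [hj, one_smul]⟩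
    · exact key hd v hnz horth i j j0 hj (hre j j0 hj)
  choose t ht0 htv using hpar
  set lam : Fin k → ℝ := fun i => ∏ j, t i j with hlam
  have hlne : ∀ i, lam i ≠ 0 := fun i =>
    Finset.prod_ne_zero_iff.2 fun j _ => ht0 i j
  set s : Fin k → ℝ := fun i => |lam i| ^ ((d : ℝ))⁻¹ with hs
  have hspos : ∀ i, 0 < s i := fun i =>
    Real.rpow_pos_of_pos (abs_pos.2 (hlne i)) _
  have hsd : ∀ i, s i ^ d = |lam i| := by
    intro i
    rw [hs]
    rw [← Real.rpow_natCast (|lam i| ^ ((d : ℝ))⁻¹) d, ← Real.rpow_mul (abs_nonneg _)]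
    rw [inv_mul_cancel₀ (by positivity : (d : ℝ) ≠ 0), Real.rpow_one]
  refine ⟨fun i => s i • v i j0, fun i => if 0 < lam i then 1 else -1, ?_, ?_, ?_, ?_⟩
  · intro i; by_cases h : 0 < lam i <;> simp [h]
  · intro i; exact smul_ne_zero (hspos i).ne' (hnz i j0)
  · intro i i' hii
    rw [real_inner_smul_left, real_inner_smul_right, horth j0 i i' hii]
    ring
  · rw [hdec]
    refine Finset.sum_congr rfl fun i _ => ?_
    have h1 : (⨂ₜ[ℝ] j : Fin d, v i j) = lam i • ⨂ₜ[ℝ] _j : Fin d, v i j0 := by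
      have : (⨂ₜ[ℝ] j : Fin d, v i j) = ⨂ₜ[ℝ] j : Fin d, t i j • v i j0 :=
        congrArg (PiTensorProduct.tprod ℝ) (funext fun j => htv i j)
      rw [this, MultilinearMap.map_smul_univ]
    have h2 : (⨂ₜ[ℝ] _j : Fin d, s i • v i j0)
        = |lam i| • ⨂ₜ[ℝ] _j : Fin d, v i j0 := by
      rw [MultilinearMap.map_smul_univ, Finset.prod_const, Finset.card_univ,
        Fintype.card_fin, hsd i]
    rw [h1, h2, smul_smul]
    congr 1
    by_cases h : 0 < lam i
    · simp [h, abs_of_pos h]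
    · have hneg : lam i < 0 := lt_of_le_of_ne (not_lt.1 h) (hlne i)
      simp [h, abs_of_neg hneg]
end

section
/- A nonzero alternating tensor in V^{⊗d} with d ≥ 3 cannot be odeco: if T ∈ V^{⊗d} is nonzero, satisfies π·T = sgn(π)·T for all permutations π, and admits a decomposition T = Σᵢ v_{i1}⊗⋯⊗v_{id} with pairwise orthogonal nonzero vectors in each slot, then T = 0, a contradiction; hence no such nonzero T exists. -/
open scoped InnerProductSpace TensorProduct

theorem stmt_16 {V : Type*} [NormedAddCommGroup V] [InnerProductSpace ℝ V]
    [FiniteDimensional ℝ V]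
    {d : ℕ} (hd : 3 ≤ d)
    (T : ⨂[ℝ] _i : Fin d, V)
    {k : ℕ} (v : Fin k → Fin d → V)
    (hnz : ∀ i j, v i j ≠ 0)
    (horth : ∀ j, ∀ i i', i ≠ i' → ⟪v i j, v i' j⟫_ℝ = 0)
    (hdec : T = ∑ i, ⨂ₜ[ℝ] j, v i j)
    (halt : ∀ e : Equiv.Perm (Fin d),
      PiTensorProduct.reindex ℝ (fun _ : Fin d => V) e T
        = ((Equiv.Perm.sign e : ℤ) : ℝ) • T) :
    T = 0 := by
  rcases Nat.eq_zero_or_pos k with hk | hk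
  · subst hk
    simpa using hdec
  exfalso
  set i0 : Fin k := ⟨0, hk⟩ with hi0
  have h0 : (0 : ℕ) < d := by omega
  have h1 : (1 : ℕ) < d := by omega
  have h2 : (2 : ℕ) < d := by omega
  set a : Fin d := ⟨0, h0⟩ with ha
  set b : Fin d := ⟨1, h1⟩ with hb
  set c : Fin d := ⟨2, h2⟩ with hc
  have hab : a ≠ b := by simp [ha, hb, Fin.ext_iff]
  have hca : c ≠ a := by simp [ha, hc, Fin.ext_iff]
  have hcb : c ≠ b := by simp [hb, hc, Fin.ext_iff]
  set M : MultilinearMap ℝ (fun _ : Fin d => V) ℝ :=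
    (MultilinearMap.mkPiAlgebra ℝ (Fin d) ℝ).compLinearMap
      (fun j => innerₛₗ ℝ (v i0 j)) with hM
  set φ : (⨂[ℝ] _i : Fin d, V) →ₗ[ℝ] ℝ := PiTensorProduct.lift M with hφdef
  have hφ : ∀ u : Fin d → V, φ (⨂ₜ[ℝ] j, u j) = ∏ j, ⟪v i0 j, u j⟫_ℝ := by
    intro u
    simp [hφdef, hM]
  set τ : Equiv.Perm (Fin d) := Equiv.swap a b with hτ
  -- value of φ on T
  have hφT : φ T = ∏ j, ⟪v i0 j, v i0 j⟫_ℝ := by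
    rw [hdec, map_sum, Finset.sum_eq_single i0]
    · exact hφ _
    · intro i _ hi
      rw [hφ]
      exact Finset.prod_eq_zero (Finset.mem_univ c) (horth c i0 i (Ne.symm hi))
    · simp
  have hφTpos : 0 < φ T := by
    rw [hφT]
    apply Finset.prod_pos
    intro j _
    have := real_inner_self_nonneg (x := v i0 j)
    rcases this.lt_or_eq with h | h
    · exact h
    · exact absurd (inner_self_eq_zero.mp h.symm) (hnz i0 j)
  -- value of φ on the reindexed tensor
  have hre : φ (PiTensorProduct.reindex ℝ (fun _ : Fin d => V) τ T)
      = ∏ j, ⟪v i0 j, v i0 (τ.symm j)⟫_ℝ := by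
    rw [hdec, map_sum, map_sum, Finset.sum_eq_single i0]
    · rw [PiTensorProduct.reindex_tprod, hφ]
    · intro i _ hi
      rw [PiTensorProduct.reindex_tprod, hφ]
      refine Finset.prod_eq_zero (Finset.mem_univ c) ?_
      have hτc : τ.symm c = c := by
        rw [hτ, Equiv.symm_swap, Equiv.swap_apply_of_ne_of_ne hca hcb]
      rw [hτc]
      exact horth c i0 i (Ne.symm hi)
    · simp
  -- nonnegativity of the reindexed value
  have hnonneg : 0 ≤ ∏ j, ⟪v i0 j, v i0 (τ.symm j)⟫_ℝ := by
    set g : Fin d → ℝ := fun j => ⟪v i0 j, v i0 (τ.symm j)⟫_ℝ with hg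
    rw [← Finset.mul_prod_erase Finset.univ g (Finset.mem_univ a),
        ← Finset.mul_prod_erase (Finset.univ.erase a) g
          (Finset.mem_erase.mpr ⟨Ne.symm hab, Finset.mem_univ b⟩), ← mul_assoc]
    have hga : g a = ⟪v i0 a, v i0 b⟫_ℝ := by
      simp [hg, hτ]
    have hgb : g b = ⟪v i0 a, v i0 b⟫_ℝ := by
      simp [hg, hτ, real_inner_comm]
    apply mul_nonneg
    · rw [hga, hgb]
      exact mul_self_nonneg _
    · apply Finset.prod_nonneg
      intro j hj
      simp only [Finset.mem_erase] at hj
      have hτj : τ.symm j = j := by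
        rw [hτ, Equiv.symm_swap, Equiv.swap_apply_of_ne_of_ne hj.2.1 hj.1]
      rw [hg]
      simp only [hτj]
      exact real_inner_self_nonneg
  -- alternation gives a contradiction
  have hsign : ((Equiv.Perm.sign τ : ℤ) : ℝ) = -1 := by
    rw [hτ, Equiv.Perm.sign_swap hab]
    norm_num
  have := halt τ
  rw [hsign] at this
  have heq : φ (PiTensorProduct.reindex ℝ (fun _ : Fin d => V) τ T) = -φ T := by
    rw [this, map_smul]
    simp
  rw [hre] at heq
  linarith
end

section
/- For d ≥ 3, any odeco tensor in V₁ ⊗ ⋯ ⊗ V_d of real finite-dimensional inner product spaces has a unique orthogonal decomposition: if Σ_{i=1}^k u_{i1}⊗⋯⊗u_{id} = Σ_{i=1}^m w_{i1}⊗⋯⊗w_{id} with, in each decomposition and each slot j, the vectors nonzero and pairwise orthogonal, then k = m and the multisets of rank-one terms coincide. -/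
open scoped InnerProductSpace TensorProduct

noncomputable def stmt17PairMap {d : ℕ} {V : Fin d → Type*} [∀ i, NormedAddCommGroup (V i)]
    [∀ i, InnerProductSpace ℝ (V i)] (c : (i : Fin d) → V i) :
    (⨂[ℝ] i, V i) →ₗ[ℝ] ℝ :=
  PiTensorProduct.lift
    ((MultilinearMap.mkPiAlgebra ℝ (Fin d) ℝ).compLinearMap
      fun j => (innerSL ℝ (c j)).toLinearMap)

lemma stmt17PairMap_tprod {d : ℕ} {V : Fin d → Type*} [∀ i, NormedAddCommGroup (V i)]
    [∀ i, InnerProductSpace ℝ (V i)] (c x : (i : Fin d) → V i) :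
    stmt17PairMap c (⨂ₜ[ℝ] j, x j) = ∏ j, ⟪c j, x j⟫_ℝ := by
  simp [stmt17PairMap]

lemma stmt17_prod_le_subset {d : ℕ} (f : Fin d → ℝ) (h0 : ∀ j, 0 ≤ f j) (h1 : ∀ j, f j ≤ 1)
    (s : Finset (Fin d)) : ∏ j, f j ≤ ∏ j ∈ s, f j := by
  classical
  rw [← Finset.prod_sdiff (Finset.subset_univ s)]
  have hle : (∏ j ∈ Finset.univ \ s, f j) ≤ 1 :=
    Finset.prod_le_one (fun j _ => h0 j) (fun j _ => h1 j)
  have hnn : (0:ℝ) ≤ ∏ j ∈ s, f j := Finset.prod_nonneg fun j _ => h0 j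
  nlinarith [hle, hnn, Finset.prod_nonneg (fun j (_ : j ∈ Finset.univ \ s) => h0 j)]

lemma stmt17_pick {d : ℕ} (hd : 3 ≤ d) (j : Fin d) :
    ∃ p q : Fin d, p ≠ q ∧ p ≠ j ∧ q ≠ j := by
  have h0 : (0:ℕ) < d := by omega
  have h1 : (1:ℕ) < d := by omega
  have h2 : (2:ℕ) < d := by omega
  by_cases hj0 : j = ⟨0, h0⟩
  · exact ⟨⟨1,h1⟩, ⟨2,h2⟩, by simp [Fin.ext_iff], by simp [hj0, Fin.ext_iff],
      by simp [hj0, Fin.ext_iff]⟩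
  · by_cases hj1 : j = ⟨1,h1⟩
    · exact ⟨⟨0,h0⟩, ⟨2,h2⟩, by simp [Fin.ext_iff], by simp [hj1, Fin.ext_iff],
        by simp [hj1, Fin.ext_iff]⟩
    · exact ⟨⟨0,h0⟩, ⟨1,h1⟩, by simp [Fin.ext_iff],
        fun h => hj0 h.symm, fun h => hj1 h.symm⟩

/-- The scalar core of the argument. -/
lemma stmt17_real_core {k m : ℕ} {α : Fin k → ℝ} {β : Fin m → ℝ} {a : Fin k → Fin m → ℝ}
    (hα : ∀ i, 0 < α i) (hβ : ∀ l, 0 < β l)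
    (hrow : ∀ i, ∑ l, |a i l| ≤ 1) (hcol : ∀ l, ∑ i, |a i l| ≤ 1)
    (hE1 : ∀ i, α i = ∑ l, β l * a i l) (hE2 : ∀ l, β l = ∑ i, α i * a i l) :
    (∀ i l, 0 ≤ a i l) ∧ (∀ i l, a i l ≠ 0 → α i = β l) ∧ (∀ i, ∑ l, |a i l| = 1) := by
  classical
  set S : ℝ := ∑ i, (α i)^2 with hS
  have hSβ : ∑ l, (β l)^2 = S := by
    have h1 : ∑ l, (β l)^2 = ∑ l, ∑ i, a i l * (α i * β l) := by
      refine Finset.sum_congr rfl fun l _ => ?_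
      rw [sq, hE2 l, Finset.sum_mul]
      exact Finset.sum_congr rfl fun i _ => by ring
    have h2 : S = ∑ i, ∑ l, a i l * (α i * β l) := by
      refine Finset.sum_congr rfl fun i _ => ?_
      rw [sq, hE1 i, Finset.mul_sum]
      exact Finset.sum_congr rfl fun l _ => by ring
    rw [h1, h2, Finset.sum_comm]
  have hST : 2*S = ∑ i, ∑ l, 2*(a i l * (α i * β l)) := by
    rw [hS, Finset.mul_sum]
    refine Finset.sum_congr rfl fun i _ => ?_
    rw [sq, hE1 i, Finset.mul_sum, Finset.mul_sum]
    exact Finset.sum_congr rfl fun l _ => by ring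
  have h12 : ∀ i ∈ Finset.univ (α := Fin k), ∀ l ∈ Finset.univ (α := Fin m),
      2*(a i l * (α i * β l)) ≤ 2*(|a i l| * (α i * β l)) := by
    intro i _ l _
    have : a i l ≤ |a i l| := le_abs_self _
    nlinarith [mul_pos (hα i) (hβ l)]
  have h23 : ∀ i ∈ Finset.univ (α := Fin k), ∀ l ∈ Finset.univ (α := Fin m),
      2*(|a i l| * (α i * β l)) ≤ |a i l| * ((α i)^2 + (β l)^2) := by
    intro i _ l _
    nlinarith [abs_nonneg (a i l), sq_nonneg (α i - β l)]
  set T2 : ℝ := ∑ i, ∑ l, 2*(|a i l| * (α i * β l)) with hT2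
  set T3 : ℝ := ∑ i, ∑ l, |a i l| * ((α i)^2 + (β l)^2) with hT3
  have hle12 : 2*S ≤ T2 := by
    rw [hST]
    exact Finset.sum_le_sum fun i hi => Finset.sum_le_sum (h12 i hi)
  have hle23 : T2 ≤ T3 :=
    Finset.sum_le_sum fun i hi => Finset.sum_le_sum (h23 i hi)
  set A : ℝ := ∑ i, (α i)^2 * ∑ l, |a i l| with hA
  set B : ℝ := ∑ l, (β l)^2 * ∑ i, |a i l| with hB
  have hT3AB : T3 = A + B := by
    have h1 : T3 = (∑ i, ∑ l, |a i l| * (α i)^2) + ∑ i, ∑ l, |a i l| * (β l)^2 := by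
      rw [hT3, ← Finset.sum_add_distrib]
      refine Finset.sum_congr rfl fun i _ => ?_
      rw [← Finset.sum_add_distrib]
      exact Finset.sum_congr rfl fun l _ => by ring
    rw [h1, hA, hB]
    congr 1
    · refine Finset.sum_congr rfl fun i _ => ?_
      rw [Finset.mul_sum]
      exact Finset.sum_congr rfl fun l _ => by ring
    · rw [Finset.sum_comm]
      refine Finset.sum_congr rfl fun l _ => ?_
      rw [Finset.mul_sum]
      exact Finset.sum_congr rfl fun i _ => by ring
  have hX : ∀ i ∈ Finset.univ (α := Fin k), (α i)^2 * ∑ l, |a i l| ≤ (α i)^2 := by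
    intro i _
    nlinarith [sq_nonneg (α i), hrow i]
  have hY : ∀ l ∈ Finset.univ (α := Fin m), (β l)^2 * ∑ i, |a i l| ≤ (β l)^2 := by
    intro l _
    nlinarith [sq_nonneg (β l), hcol l]
  have hAle : A ≤ S := Finset.sum_le_sum hX
  have hBle : B ≤ S := le_trans (Finset.sum_le_sum hY) (le_of_eq hSβ)
  have hle3S : T3 ≤ 2*S := by rw [hT3AB]; linarith
  have heq12 : 2*S = T2 := le_antisymm hle12 (by linarith)
  have heq23 : T2 = T3 := le_antisymm hle23 (by linarith)
  have heq3S : T3 = 2*S := le_antisymm hle3S (by linarith)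
  -- termwise equalities
  have hterm12 : ∀ i l, 2*(a i l * (α i * β l)) = 2*(|a i l| * (α i * β l)) := by
    intro i l
    have houter : ∀ i ∈ Finset.univ (α := Fin k),
        (∑ l, 2*(a i l * (α i * β l))) ≤ ∑ l, 2*(|a i l| * (α i * β l)) :=
      fun i hi => Finset.sum_le_sum (h12 i hi)
    have hsums : (∑ i, ∑ l, 2*(a i l * (α i * β l))) = ∑ i, ∑ l, 2*(|a i l| * (α i * β l)) := by
      rw [← hST, ← hT2, heq12]
    have heqout := (Finset.sum_eq_sum_iff_of_le houter).mp hsums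
    exact (Finset.sum_eq_sum_iff_of_le (h12 i (Finset.mem_univ i))).mp
      (heqout i (Finset.mem_univ i)) l (Finset.mem_univ l)
  have ha0 : ∀ i l, 0 ≤ a i l := by
    intro i l
    have h := hterm12 i l
    have hpos : 0 < α i * β l := mul_pos (hα i) (hβ l)
    have h2 : a i l * (α i * β l) = |a i l| * (α i * β l) := by linarith
    have := mul_right_cancel₀ hpos.ne' h2
    rw [this]; exact abs_nonneg _
  have hterm23 : ∀ i l, 2*(|a i l| * (α i * β l)) = |a i l| * ((α i)^2 + (β l)^2) := by
    intro i l
    have houter : ∀ i ∈ Finset.univ (α := Fin k),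
        (∑ l, 2*(|a i l| * (α i * β l))) ≤ ∑ l, |a i l| * ((α i)^2 + (β l)^2) :=
      fun i hi => Finset.sum_le_sum (h23 i hi)
    have hsums : (∑ i, ∑ l, 2*(|a i l| * (α i * β l)))
        = ∑ i, ∑ l, |a i l| * ((α i)^2 + (β l)^2) := by rw [← hT2, ← hT3, heq23]
    have heqout := (Finset.sum_eq_sum_iff_of_le houter).mp hsums
    exact (Finset.sum_eq_sum_iff_of_le (h23 i (Finset.mem_univ i))).mp
      (heqout i (Finset.mem_univ i)) l (Finset.mem_univ l)
  have hab : ∀ i l, a i l ≠ 0 → α i = β l := by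
    intro i l hne
    have h := hterm23 i l
    have habs : 0 < |a i l| := abs_pos.mpr hne
    have h2 : |a i l| * ((α i - β l)^2) = 0 := by nlinarith [h]
    have h3 : (α i - β l)^2 = 0 := by
      rcases mul_eq_zero.mp h2 with h' | h'
      · exact absurd h' habs.ne'
      · exact h'
    have := pow_eq_zero_iff (n := 2) (by norm_num) |>.mp h3
    linarith
  have hrow1 : ∀ i, ∑ l, |a i l| = 1 := by
    intro i
    have heqA : A = S := by
      have h1 : A + B = 2*S := by rw [← hT3AB, heq3S]
      linarith
    have := (Finset.sum_eq_sum_iff_of_le hX).mp (by rw [← hA, heqA, hS])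
    have hi := this i (Finset.mem_univ i)
    have hα2 : (0:ℝ) < (α i)^2 := pow_pos (hα i) 2
    have h2 : (α i)^2 * (∑ l, |a i l|) = (α i)^2 * 1 := by rw [mul_one]; exact hi
    exact mul_left_cancel₀ hα2.ne' h2
  exact ⟨ha0, hab, hrow1⟩

set_option maxHeartbeats 1000000 in
lemma stmt17_exists_match {d : ℕ} (hd : 3 ≤ d)
    (V : Fin d → Type*) [∀ i, NormedAddCommGroup (V i)]
    [∀ i, InnerProductSpace ℝ (V i)]
    {k m : ℕ}
    (u : Fin k → (i : Fin d) → V i) (w : Fin m → (i : Fin d) → V i)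
    (hunz : ∀ i j, u i j ≠ 0) (hwnz : ∀ i j, w i j ≠ 0)
    (huorth : ∀ j, ∀ i i', i ≠ i' → ⟪u i j, u i' j⟫_ℝ = 0)
    (hworth : ∀ j, ∀ i i', i ≠ i' → ⟪w i j, w i' j⟫_ℝ = 0)
    (heq : ∑ i, (⨂ₜ[ℝ] j, u i j) = ∑ i, ⨂ₜ[ℝ] j, w i j) :
    ∀ i, ∃ l, (⨂ₜ[ℝ] j, u i j) = ⨂ₜ[ℝ] j, w l j := by
  classical
  intro i0
  have j0 : Fin d := ⟨0, by omega⟩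
  set eu : Fin k → (j : Fin d) → V j := fun i j => ‖u i j‖⁻¹ • u i j with heu
  set ew : Fin m → (j : Fin d) → V j := fun l j => ‖w l j‖⁻¹ • w l j with hew
  set α : Fin k → ℝ := fun i => ∏ j, ‖u i j‖ with hαdef
  set β : Fin m → ℝ := fun l => ∏ j, ‖w l j‖ with hβdef
  set t : Fin d → Fin k → Fin m → ℝ := fun j i l => ⟪eu i j, ew l j⟫_ℝ with htdef
  set a : Fin k → Fin m → ℝ := fun i l => ∏ j, t j i l with hadef
  have hα : ∀ i, 0 < α i := fun i => Finset.prod_pos fun j _ => norm_pos_iff.mpr (hunz i j)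
  have hβ : ∀ l, 0 < β l := fun l => Finset.prod_pos fun j _ => norm_pos_iff.mpr (hwnz l j)
  have heu1 : ∀ i j, ‖eu i j‖ = 1 := fun i j => norm_smul_inv_norm (𝕜 := ℝ) (hunz i j)
  have hew1 : ∀ l j, ‖ew l j‖ = 1 := fun l j => norm_smul_inv_norm (𝕜 := ℝ) (hwnz l j)
  have hon_w : ∀ j, Orthonormal ℝ (fun l => ew l j) := by
    intro j
    refine ⟨fun l => hew1 l j, fun l l' hll' => ?_⟩
    simp only [hew, real_inner_smul_left, real_inner_smul_right, hworth j l l' hll',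
      mul_zero]
  have hon_u : ∀ j, Orthonormal ℝ (fun i => eu i j) := by
    intro j
    refine ⟨fun i => heu1 i j, fun i i' hii' => ?_⟩
    simp only [heu, real_inner_smul_left, real_inner_smul_right, huorth j i i' hii',
      mul_zero]
  -- the two linear equations
  have hE1 : ∀ i, α i = ∑ l, β l * a i l := by
    intro i
    have h := congrArg (stmt17PairMap (eu i)) heq
    rw [map_sum, map_sum] at h
    simp only [stmt17PairMap_tprod] at h
    have hL : ∑ i', ∏ j, ⟪eu i j, u i' j⟫_ℝ = α i := by
      rw [Finset.sum_eq_single i]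
      · refine Finset.prod_congr rfl fun j _ => ?_
        simp only [heu, real_inner_smul_left, real_inner_self_eq_norm_sq]
        rw [sq]
        rw [← mul_assoc, inv_mul_cancel₀ (norm_ne_zero_iff.mpr (hunz i j)), one_mul]
      · intro i' _ hne
        refine Finset.prod_eq_zero (Finset.mem_univ j0) ?_
        simp only [heu, real_inner_smul_left, huorth j0 i i' (Ne.symm hne), mul_zero]
      · intro h; exact absurd (Finset.mem_univ i) h
    have hR : ∀ l, ∏ j, ⟪eu i j, w l j⟫_ℝ = β l * a i l := by
      intro l
      simp only [hβdef, hadef, ← Finset.prod_mul_distrib]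
      refine Finset.prod_congr rfl fun j _ => ?_
      have hw : w l j = ‖w l j‖ • ew l j := by
        simp only [hew, smul_inv_smul₀ (norm_ne_zero_iff.mpr (hwnz l j))]
      conv_lhs => rw [hw]
      rw [real_inner_smul_right]
    rw [hL] at h
    rw [h]
    exact Finset.sum_congr rfl fun l _ => hR l
  have hE2 : ∀ l, β l = ∑ i, α i * a i l := by
    intro l
    have h := congrArg (stmt17PairMap (ew l)) heq
    rw [map_sum, map_sum] at h
    simp only [stmt17PairMap_tprod] at h
    have hL : ∑ l', ∏ j, ⟪ew l j, w l' j⟫_ℝ = β l := by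
      rw [Finset.sum_eq_single l]
      · refine Finset.prod_congr rfl fun j _ => ?_
        simp only [hew, real_inner_smul_left, real_inner_self_eq_norm_sq]
        rw [sq]
        rw [← mul_assoc, inv_mul_cancel₀ (norm_ne_zero_iff.mpr (hwnz l j)), one_mul]
      · intro l' _ hne
        refine Finset.prod_eq_zero (Finset.mem_univ j0) ?_
        simp only [hew, real_inner_smul_left, hworth j0 l l' (Ne.symm hne), mul_zero]
      · intro h; exact absurd (Finset.mem_univ l) h
    have hR : ∀ i, ∏ j, ⟪ew l j, u i j⟫_ℝ = α i * a i l := by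
      intro i
      simp only [hαdef, hadef, ← Finset.prod_mul_distrib]
      refine Finset.prod_congr rfl fun j _ => ?_
      have hu : u i j = ‖u i j‖ • eu i j := by
        simp only [heu, smul_inv_smul₀ (norm_ne_zero_iff.mpr (hunz i j))]
      conv_lhs => rw [hu]
      rw [real_inner_smul_right, real_inner_comm]
    rw [hL] at h
    rw [← h]
    exact Finset.sum_congr rfl fun i _ => hR i
  -- bounds on t
  have hT : ∀ j i l, |t j i l| ≤ 1 := by
    intro j i l
    simp only [htdef]
    calc |⟪eu i j, ew l j⟫_ℝ| ≤ ‖eu i j‖ * ‖ew l j‖ := abs_real_inner_le_norm _ _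
    _ = 1 := by rw [heu1, hew1, one_mul]
  have hT0 : ∀ j i l, 0 ≤ |t j i l| := fun j i l => abs_nonneg _
  have hBr : ∀ i j, ∑ l, (t j i l)^2 ≤ 1 := by
    intro i j
    have h := (hon_w j).sum_inner_products_le (s := Finset.univ) (eu i j)
    rw [heu1 i j, one_pow] at h
    calc ∑ l, (t j i l)^2 = ∑ l, ‖⟪ew l j, eu i j⟫_ℝ‖^2 := by
          refine Finset.sum_congr rfl fun l _ => ?_
          rw [Real.norm_eq_abs, sq_abs, real_inner_comm]
    _ ≤ 1 := h
  have hBc : ∀ l j, ∑ i, (t j i l)^2 ≤ 1 := by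
    intro l j
    have h := (hon_u j).sum_inner_products_le (s := Finset.univ) (ew l j)
    rw [hew1 l j, one_pow] at h
    calc ∑ i, (t j i l)^2 = ∑ i, ‖⟪eu i j, ew l j⟫_ℝ‖^2 := by
          refine Finset.sum_congr rfl fun i _ => ?_
          rw [Real.norm_eq_abs, sq_abs]
    _ ≤ 1 := h
  -- pair sums
  have hpair_row : ∀ (p q : Fin d) (i : Fin k), ∑ l, |t p i l| * |t q i l| ≤ 1 := by
    intro p q i
    have hcs := Finset.sum_mul_sq_le_sq_mul_sq Finset.univ
      (fun l => |t p i l|) (fun l => |t q i l|)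
    simp only [sq_abs] at hcs
    have h1 := hBr i p
    have h2 := hBr i q
    have hnn : (0:ℝ) ≤ ∑ l, |t p i l| * |t q i l| :=
      Finset.sum_nonneg fun l _ => mul_nonneg (abs_nonneg _) (abs_nonneg _)
    nlinarith [hcs, h1, h2, hnn, Finset.sum_nonneg fun l (_ : l ∈ Finset.univ) =>
      sq_nonneg (t p i l), Finset.sum_nonneg fun l (_ : l ∈ Finset.univ) => sq_nonneg (t q i l)]
  have hpair_col : ∀ (p q : Fin d) (l : Fin m), ∑ i, |t p i l| * |t q i l| ≤ 1 := by
    intro p q l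
    have hcs := Finset.sum_mul_sq_le_sq_mul_sq Finset.univ
      (fun i => |t p i l|) (fun i => |t q i l|)
    simp only [sq_abs] at hcs
    have h1 := hBc l p
    have h2 := hBc l q
    have hnn : (0:ℝ) ≤ ∑ i, |t p i l| * |t q i l| :=
      Finset.sum_nonneg fun i _ => mul_nonneg (abs_nonneg _) (abs_nonneg _)
    nlinarith [hcs, h1, h2, hnn, Finset.sum_nonneg fun i (_ : i ∈ Finset.univ) =>
      sq_nonneg (t p i l), Finset.sum_nonneg fun i (_ : i ∈ Finset.univ) => sq_nonneg (t q i l)]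
  have habs_a : ∀ i l, |a i l| = ∏ j, |t j i l| := by
    intro i l; simp only [hadef]; exact Finset.abs_prod _ _
  -- |a i l| ≤ |t p i l| * |t q i l| for p ≠ q
  have hale : ∀ (p q : Fin d), p ≠ q → ∀ i l, |a i l| ≤ |t p i l| * |t q i l| := by
    intro p q hpq i l
    rw [habs_a]
    calc ∏ j, |t j i l| ≤ ∏ j ∈ ({p, q} : Finset (Fin d)), |t j i l| :=
          stmt17_prod_le_subset _ (fun j => hT0 j i l) (fun j => hT j i l) _
    _ = |t p i l| * |t q i l| := Finset.prod_pair hpq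
  obtain ⟨p0, q0, hp0, -, -⟩ := stmt17_pick hd j0
  have hrow : ∀ i, ∑ l, |a i l| ≤ 1 := by
    intro i
    calc ∑ l, |a i l| ≤ ∑ l, |t p0 i l| * |t q0 i l| :=
          Finset.sum_le_sum fun l _ => hale p0 q0 hp0 i l
    _ ≤ 1 := hpair_row p0 q0 i
  have hcol : ∀ l, ∑ i, |a i l| ≤ 1 := by
    intro l
    calc ∑ i, |a i l| ≤ ∑ i, |t p0 i l| * |t q0 i l| :=
          Finset.sum_le_sum fun i _ => hale p0 q0 hp0 i l
    _ ≤ 1 := hpair_col p0 q0 l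
  obtain ⟨ha0, hab, hrow1⟩ := stmt17_real_core hα hβ hrow hcol hE1 hE2
  -- find the matching l for i0
  have hexl : ∃ l, a i0 l ≠ 0 := by
    by_contra h
    push_neg at h
    have : α i0 = 0 := by
      rw [hE1 i0]
      exact Finset.sum_eq_zero fun l _ => by rw [h l, mul_zero]
    exact (hα i0).ne' this
  obtain ⟨l, hl⟩ := hexl
  have hapos : 0 < |a i0 l| := abs_pos.mpr hl
  -- termwise equality for each pair
  have hpair_eq : ∀ (p q : Fin d), p ≠ q → ∀ l', |a i0 l'| = |t p i0 l'| * |t q i0 l'| := by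
    intro p q hpq
    have hle : ∀ l' ∈ Finset.univ (α := Fin m), |a i0 l'| ≤ |t p i0 l'| * |t q i0 l'| :=
      fun l' _ => hale p q hpq i0 l'
    have hsum : (∑ l', |a i0 l'|) = ∑ l', |t p i0 l'| * |t q i0 l'| := by
      have h1 := hrow1 i0
      have h2 := hpair_row p q i0
      have h3 := Finset.sum_le_sum hle
      linarith
    intro l'
    exact (Finset.sum_eq_sum_iff_of_le hle).mp hsum l' (Finset.mem_univ l')
  have htone : ∀ j, |t j i0 l| = 1 := by
    intro j
    obtain ⟨p, q, hpq, hpj, hqj⟩ := stmt17_pick hd j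
    have h1 : |a i0 l| = |t p i0 l| * |t q i0 l| := hpair_eq p q hpq l
    have h2 : |a i0 l| ≤ |t p i0 l| * |t q i0 l| * |t j i0 l| := by
      rw [habs_a]
      have hsub : (∏ j' ∈ ({p, q, j} : Finset (Fin d)), |t j' i0 l|)
          = |t p i0 l| * |t q i0 l| * |t j i0 l| := by
        rw [Finset.prod_insert (by simp [hpq, hpj]), Finset.prod_insert (by simp [hqj]),
          Finset.prod_singleton, mul_assoc]
      rw [← hsub]
      exact stmt17_prod_le_subset _ (fun j' => hT0 j' i0 l) (fun j' => hT j' i0 l) _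
    have hge : 1 ≤ |t j i0 l| := by nlinarith [hapos, h1, h2]
    exact le_antisymm (hT j i0 l) hge
  have haone : a i0 l = 1 := by
    have habs1 : |a i0 l| = 1 := by
      rw [habs_a]
      exact Finset.prod_eq_one fun j _ => htone j
    rwa [abs_of_nonneg (ha0 i0 l)] at habs1
  have hαβ : α i0 = β l := hab i0 l hl
  -- direction alignment
  have heuew : ∀ j, eu i0 j = t j i0 l • ew l j := by
    intro j
    have hτ : (t j i0 l)^2 = 1 := by rw [← sq_abs, htone j, one_pow]
    have hinner : ⟪eu i0 j, t j i0 l • ew l j⟫_ℝ = t j i0 l * t j i0 l := by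
      rw [real_inner_smul_right]
    have hn : ‖eu i0 j - t j i0 l • ew l j‖^2 = 0 := by
      rw [norm_sub_sq_real, hinner, heu1 i0 j, norm_smul, hew1 l j, Real.norm_eq_abs,
        htone j]
      nlinarith [hτ]
    have := norm_eq_zero.mp (pow_eq_zero_iff (n := 2) (by norm_num) |>.mp hn)
    exact sub_eq_zero.mp this
  refine ⟨l, ?_⟩
  have hueq : ∀ j, u i0 j = (‖u i0 j‖ * (t j i0 l * ‖w l j‖⁻¹)) • w l j := by
    intro j
    have h1 : u i0 j = ‖u i0 j‖ • eu i0 j := by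
      simp only [heu, smul_inv_smul₀ (norm_ne_zero_iff.mpr (hunz i0 j))]
    conv_lhs => rw [h1, heuew j]
    simp only [hew, smul_smul]
  calc (⨂ₜ[ℝ] j, u i0 j)
      = ⨂ₜ[ℝ] j, ((‖u i0 j‖ * (t j i0 l * ‖w l j‖⁻¹)) • w l j) := by
        exact congrArg (PiTensorProduct.tprod ℝ) (funext hueq)
    _ = (∏ j, (‖u i0 j‖ * (t j i0 l * ‖w l j‖⁻¹))) • ⨂ₜ[ℝ] j, w l j :=
        MultilinearMap.map_smul_univ _ _ _
    _ = ⨂ₜ[ℝ] j, w l j := by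
        have hprod : (∏ j, (‖u i0 j‖ * (t j i0 l * ‖w l j‖⁻¹))) = 1 := by
          rw [Finset.prod_mul_distrib, Finset.prod_mul_distrib, Finset.prod_inv_distrib]
          have h1 : (∏ j, t j i0 l) = 1 := haone
          rw [h1, one_mul]
          have h2 : (∏ j, ‖u i0 j‖) = β l := hαβ
          rw [h2]
          exact mul_inv_cancel₀ (hβ l).ne'
        rw [hprod, one_smul]

theorem stmt_17 {d : ℕ} (hd : 3 ≤ d)
    (V : Fin d → Type*) [∀ i, NormedAddCommGroup (V i)]
    [∀ i, InnerProductSpace ℝ (V i)] [∀ i, FiniteDimensional ℝ (V i)]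
    {k m : ℕ}
    (u : Fin k → (i : Fin d) → V i) (w : Fin m → (i : Fin d) → V i)
    (hunz : ∀ i j, u i j ≠ 0) (hwnz : ∀ i j, w i j ≠ 0)
    (huorth : ∀ j, ∀ i i', i ≠ i' → ⟪u i j, u i' j⟫_ℝ = 0)
    (hworth : ∀ j, ∀ i i', i ≠ i' → ⟪w i j, w i' j⟫_ℝ = 0)
    (heq : ∑ i, (⨂ₜ[ℝ] j, u i j) = ∑ i, ⨂ₜ[ℝ] j, w i j) :
    k = m ∧ ∃ σ : Fin k ≃ Fin m,
      ∀ i, (⨂ₜ[ℝ] j, u i j) = ⨂ₜ[ℝ] j, w (σ i) j := by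
  classical
  have j0 : Fin d := ⟨0, by omega⟩
  have hUinj : Function.Injective (fun i => (⨂ₜ[ℝ] j, u i j)) := by
    intro i i' h
    by_contra hne
    have hc := congrArg (stmt17PairMap (u i)) h
    simp only [stmt17PairMap_tprod] at hc
    have hz : ∏ j, ⟪u i j, u i' j⟫_ℝ = 0 :=
      Finset.prod_eq_zero (Finset.mem_univ j0) (huorth j0 i i' hne)
    have hp : 0 < ∏ j, ⟪u i j, u i j⟫_ℝ :=
      Finset.prod_pos fun j _ => by rw [real_inner_self_eq_norm_sq]; exact pow_pos (norm_pos_iff.mpr (hunz i j)) 2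
    rw [hz] at hc
    exact hp.ne' hc
  have hWinj : Function.Injective (fun l => (⨂ₜ[ℝ] j, w l j)) := by
    intro l l' h
    by_contra hne
    have hc := congrArg (stmt17PairMap (w l)) h
    simp only [stmt17PairMap_tprod] at hc
    have hz : ∏ j, ⟪w l j, w l' j⟫_ℝ = 0 :=
      Finset.prod_eq_zero (Finset.mem_univ j0) (hworth j0 l l' hne)
    have hp : 0 < ∏ j, ⟪w l j, w l j⟫_ℝ :=
      Finset.prod_pos fun j _ => by rw [real_inner_self_eq_norm_sq]; exact pow_pos (norm_pos_iff.mpr (hwnz l j)) 2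
    rw [hz] at hc
    exact hp.ne' hc
  have hex1 := stmt17_exists_match hd V u w hunz hwnz huorth hworth heq
  have hex2 := stmt17_exists_match hd V w u hwnz hunz hworth huorth heq.symm
  choose f hf using hex1
  choose g hg using hex2
  have hgf : ∀ i, g (f i) = i := by
    intro i
    exact hUinj ((hg (f i)).symm.trans (hf i).symm)
  have hfg : ∀ l, f (g l) = l := by
    intro l
    exact hWinj ((hf (g l)).symm.trans (hg l).symm)
  refine ⟨?_, ⟨⟨f, g, hgf, hfg⟩, hf⟩⟩
  have hcard := Fintype.card_congr (⟨f, g, hgf, hfg⟩ : Fin k ≃ Fin m)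
  simpa using hcard
end

section
/- The set of symmetrically udeco tensors in Sym_d(ℂⁿ) is closed in the Euclidean topology: the image of the continuous map φ : U(n) × P(ℂⁿ) → P(Sym_d(ℂⁿ)) sending (u, [λ₁:…:λ_n]) to the class of Σᵢ λᵢ uᵢ^{⊗d} (uᵢ the columns of u) is compact, and the cone over it together with 0 is closed. -/
/-! For `d ≠ 0` and pairwise orthogonal `v`, expanding the Hermitian square gives
`‖∑ᵢ vᵢ^{⊗d}‖² = ∑ᵢ ‖vᵢ‖^{2d}`, so `v ↦ ∑ᵢ vᵢ^{⊗d}` is proper on the closed set of orthogonal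
`k`-tuples and has closed image. Zero vectors contribute nothing and at most `n` nonzero vectors
are orthogonal, so the udeco tensors form the finite union of these images over `k ≤ n`.
For `d = 0` a udeco tensor is the constant `k ≤ n`, so there are finitely many. -/

open scoped ComplexConjugate

open Bornology Set

theorem IsClosed.image_of_isBounded_inter_preimage {X Y : Type*} [PseudoMetricSpace X]
    [ProperSpace X] [MetricSpace Y] {f : X → Y} (hf : Continuous f) {s : Set X}
    (hs : IsClosed s) (hbdd : ∀ B, IsBounded B → IsBounded (s ∩ f ⁻¹' B)) :
    IsClosed (f '' s) := by
  have hproper : IsProperMap (s.domRestrict f) := by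
    refine isProperMap_iff_isCompact_preimage.2 ⟨hf.comp continuous_subtype_val, fun K hK => ?_⟩
    have hKs : IsCompact (s ∩ f ⁻¹' K) :=
      Metric.isCompact_of_isClosed_isBounded (hs.inter (hK.isClosed.preimage hf))
        (hbdd K hK.isBounded)
    convert hs.isClosedEmbedding_subtypeVal.isCompact_preimage hKs using 1
    ext x
    simp
  simpa [Set.range_domRestrict] using hproper.isClosed_range

variable {R 𝕜 ι α : Type*}

/-- `∑ᵢ vᵢ^{⊗d}` in coordinates: its value at `f` is the coefficient of
`e_{f 0} ⊗ ⋯ ⊗ e_{f (d-1)}`. -/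
def sumTensorPow [CommSemiring R] [Fintype ι] (d : ℕ) (v : ι → α → R) : (Fin d → α) → R :=
  fun f => ∑ i, ∏ j, v i (f j)

def PairwiseOrthogonal [CommSemiring R] [StarRing R] [Fintype α] (v : ι → α → R) : Prop :=
  Pairwise fun i i' => ∑ x, conj (v i x) * v i' x = 0

theorem sum_conj_mul_sumTensorPow [CommSemiring R] [StarRing R] [Fintype ι] [Fintype α]
    {d : ℕ} (hd : d ≠ 0) {v : ι → α → R} (hv : PairwiseOrthogonal v) :
    ∑ f, conj (sumTensorPow d v f) * sumTensorPow d v f = ∑ i, (∑ x, conj (v i x) * v i x) ^ d :=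
  calc ∑ f, conj (sumTensorPow d v f) * sumTensorPow d v f
      = ∑ i, ∑ i', (∑ x, conj (v i x) * v i' x) ^ d := by
        simp only [sumTensorPow, map_sum, map_prod, Finset.sum_mul_sum, ← Finset.prod_mul_distrib,
          Fintype.sum_pow]
        rw [Finset.sum_comm]
        exact Finset.sum_congr rfl fun _ _ => Finset.sum_comm
    _ = ∑ i, (∑ x, conj (v i x) * v i x) ^ d :=
        Finset.sum_congr rfl fun i _ => Finset.sum_eq_single i
          (fun _ _ h => by rw [hv h.symm, zero_pow hd]) (by simp)

theorem sumTensorPow_comp_embedding_ne_zero [CommSemiring R] [Fintype ι] {d : ℕ} (hd : d ≠ 0)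
    (v : ι → α → R) : ∃ (m : ℕ) (e : Fin m ↪ ι), (∀ i, v (e i) ≠ 0) ∧
      sumTensorPow d (v ∘ e) = sumTensorPow d v := by
  classical
  let e : Fin _ ≃ {i // v i ≠ 0} := (Fintype.equivFin _).symm
  refine ⟨_, e.toEmbedding.trans (Function.Embedding.subtype _), fun i => (e i).2, ?_⟩
  funext f
  have hvanish (i : ι) (h : ∏ j, v i (f j) ≠ 0) : v i ≠ 0 := fun hi =>
    h (Finset.prod_eq_zero (Finset.mem_univ ⟨0, Nat.pos_of_ne_zero hd⟩) (congrFun hi _))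
  calc sumTensorPow d (v ∘ e.toEmbedding.trans (Function.Embedding.subtype _)) f
      = ∑ i : {i // v i ≠ 0}, ∏ j, v i (f j) := e.sum_comp fun i => ∏ j, v i (f j)
    _ = ∑ i with v i ≠ 0, ∏ j, v i (f j) := by rw [Finset.sum_subtype _ Finset.mem_filter_univ]
    _ = sumTensorPow d v f := Finset.sum_filter_of_ne fun i _ => hvanish i

section RCLike

variable [RCLike 𝕜] [Fintype α]

theorem PairwiseOrthogonal.card_le [Fintype ι] {v : ι → α → 𝕜} (hv : PairwiseOrthogonal v)
    (hne : ∀ i, v i ≠ 0) : Fintype.card ι ≤ Fintype.card α := by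
  have hli : LinearIndependent 𝕜 fun i => WithLp.toLp 2 (v i) := by
    refine linearIndependent_of_ne_zero_of_inner_eq_zero (fun i h => hne i ?_) fun i i' h => ?_
    · simpa using h
    · simpa [EuclideanSpace.inner_eq_star_dotProduct, dotProduct, mul_comm] using hv h
  simpa using hli.fintype_card_le_finrank

theorem isClosed_setOf_pairwiseOrthogonal :
    IsClosed {v : ι → α → 𝕜 | PairwiseOrthogonal v} := by
  simp only [PairwiseOrthogonal, Pairwise, ofPred_forall, starRingEnd_apply]
  exact isClosed_iInter fun i => isClosed_iInter fun i' => isClosed_iInter fun _ =>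
    isClosed_eq (by fun_prop) continuous_const

theorem PairwiseOrthogonal.norm_pow_le [Fintype ι] {d : ℕ} (hd : d ≠ 0) {v : ι → α → 𝕜}
    (hv : PairwiseOrthogonal v) (i : ι) (x : α) :
    ‖v i x‖ ^ (2 * d) ≤ ∑ f, ‖sumTensorPow d v f‖ ^ 2 := by
  have hnorm : ∑ f, ‖sumTensorPow d v f‖ ^ 2 = ∑ i, (∑ x, ‖v i x‖ ^ 2) ^ d := by
    have := sum_conj_mul_sumTensorPow hd hv
    simp only [RCLike.conj_mul] at this
    exact_mod_cast this
  rw [hnorm, pow_mul]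
  calc (‖v i x‖ ^ 2) ^ d ≤ (∑ x, ‖v i x‖ ^ 2) ^ d := by
        gcongr
        exact Finset.single_le_sum (f := fun x => ‖v i x‖ ^ 2) (fun _ _ => by positivity)
          (Finset.mem_univ x)
    _ ≤ ∑ i, (∑ x, ‖v i x‖ ^ 2) ^ d :=
        Finset.single_le_sum (f := fun i => (∑ x, ‖v i x‖ ^ 2) ^ d) (fun _ _ => by positivity)
          (Finset.mem_univ i)

theorem PairwiseOrthogonal.norm_le [Fintype ι] {d : ℕ} (hd : d ≠ 0) {v : ι → α → 𝕜}
    (hv : PairwiseOrthogonal v) :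
    ‖v‖ ≤ max 1 (Fintype.card (Fin d → α) * ‖sumTensorPow d v‖ ^ 2) := by
  refine (pi_norm_le_iff_of_nonneg (by positivity)).2 fun i =>
    (pi_norm_le_iff_of_nonneg (by positivity)).2 fun x => ?_
  rcases le_or_gt ‖v i x‖ 1 with h | h
  · exact le_max_of_le_left h
  refine le_max_of_le_right ?_
  calc ‖v i x‖ ≤ ‖v i x‖ ^ (2 * d) := le_self_pow₀ h.le (by omega)
    _ ≤ ∑ f, ‖sumTensorPow d v f‖ ^ 2 := hv.norm_pow_le hd i x
    _ ≤ ∑ _f : Fin d → α, ‖sumTensorPow d v‖ ^ 2 := by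
        gcongr with f; exact norm_le_pi_norm _ f
    _ = _ := by simp

theorem isClosed_image_sumTensorPow [Fintype ι] {d : ℕ} (hd : d ≠ 0) :
    IsClosed (sumTensorPow d '' {v : ι → α → 𝕜 | PairwiseOrthogonal v}) := by
  refine isClosed_setOf_pairwiseOrthogonal.image_of_isBounded_inter_preimage
    (by unfold sumTensorPow; fun_prop) fun B hB => ?_
  obtain ⟨C, hC⟩ := isBounded_iff_forall_norm_le.1 hB
  refine isBounded_iff_forall_norm_le.2 ⟨max 1 (Fintype.card (Fin d → α) * C ^ 2), ?_⟩
  rintro v ⟨hv, hvB⟩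
  refine (hv.norm_le hd).trans (max_le_max le_rfl ?_)
  gcongr
  exact hC _ hvB

theorem setOf_sumTensorPow_eq_biUnion {d : ℕ} (hd : d ≠ 0) :
    {T : (Fin d → α) → 𝕜 | ∃ (k : ℕ) (v : Fin k → α → 𝕜),
        (∀ i, v i ≠ 0) ∧ PairwiseOrthogonal v ∧ T = sumTensorPow d v} =
      ⋃ k ≤ Fintype.card α, sumTensorPow d '' {v : Fin k → α → 𝕜 | PairwiseOrthogonal v} := by
  ext T
  simp only [mem_ofPred_eq, mem_iUnion, mem_image, exists_prop]
  constructor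
  · rintro ⟨k, v, hne, hv, rfl⟩
    exact ⟨k, by simpa using hv.card_le hne, v, hv, rfl⟩
  · rintro ⟨k, -, v, hv, rfl⟩
    obtain ⟨m, e, hne, he⟩ := sumTensorPow_comp_embedding_ne_zero hd v
    exact ⟨m, v ∘ e, hne, fun i i' h => hv (e.injective.ne h), he.symm⟩

end RCLike

/-- A tensor in coordinates: `T : (Fin d → Fin n) → ℂ`, with `T f` the coefficient of
`e_{f 0} ⊗ ⋯ ⊗ e_{f (d-1)}`. It is symmetrically udeco if it is a sum of `d`-th tensor
powers of nonzero, pairwise orthogonal vectors in `ℂⁿ`. The set of such tensors is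
closed in the Euclidean topology. -/
theorem stmt_18 (n d : ℕ) :
    IsClosed {T : (Fin d → Fin n) → ℂ |
      ∃ (k : ℕ) (v : Fin k → Fin n → ℂ),
        (∀ i, v i ≠ 0) ∧
        (∀ i i', i ≠ i' → ∑ j, conj (v i j) * v i' j = 0) ∧
        T = fun f => ∑ i, ∏ j, v i (f j)} := by
  rcases eq_or_ne d 0 with rfl | hd
  · refine ((finite_range fun k : Fin (n + 1) => fun _ : Fin 0 → Fin n => (k : ℂ)).subset
      ?_).isClosed
    rintro _ ⟨k, v, hne, hv, rfl⟩
    exact ⟨⟨k, Nat.lt_succ_of_le (by simpa using PairwiseOrthogonal.card_le hv hne)⟩, by simp⟩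
  · have h : IsClosed (⋃ k ≤ Fintype.card (Fin n),
        sumTensorPow d '' {v : Fin k → Fin n → ℂ | PairwiseOrthogonal v}) :=
      (finite_Iic _).isClosed_biUnion fun _ _ => isClosed_image_sumTensorPow hd
    rwa [← setOf_sumTensorPow_eq_biUnion hd] at h
end

section
/- Let V be a finite-dimensional complex Hermitian inner product space, and let T = Σᵢ uᵢ ∧ vᵢ ∧ wᵢ be an alternatingly udeco three-tensor (the vectors u₁,v₁,w₁,…,u_k,v_k,w_k pairwise orthogonal and nonzero). Define the bi-semilinear bracket [·,·] on V via T, and the linear operator H = μ∘ψ where μ(a⊗b) = [a,b] and ψ : V → V⊗V is the semilinear map with (c|[a,b]) = (a⊗b|ψ(c)). Then H is Hermitian positive semidefinite and satisfies the Casimir identity [Hx,y] = [x,Hy] for all x,y ∈ V. -/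
open scoped InnerProductSpace

/-- For the alternatingly udeco tensor `T = ∑ i, uᵢ ∧ vᵢ ∧ wᵢ`, the induced
bi-semilinear bracket is
`B a b = ∑ i, (⟪a,uᵢ⟫⟪b,vᵢ⟫ • wᵢ - ⟪a,uᵢ⟫⟪b,wᵢ⟫ • vᵢ - ⟪a,vᵢ⟫⟪b,uᵢ⟫ • wᵢ
              + ⟪a,vᵢ⟫⟪b,wᵢ⟫ • uᵢ + ⟪a,wᵢ⟫⟪b,uᵢ⟫ • vᵢ - ⟪a,wᵢ⟫⟪b,vᵢ⟫ • uᵢ)`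
(here `⟪x,y⟫_ℂ` is conjugate-linear in `x`, so `B` is semilinear in both arguments),
and the Casimir-type operator `H = μ ∘ ψ` is, in terms of any orthonormal basis `e`,
`H x = ∑ r, ∑ s, ⟪B (e r) (e s), x⟫ • B (e r) (e s)`. Then `H` is a Hermitian positive
semidefinite linear operator and `B (H x) y = B x (H y)` for all `x, y`. -/
theorem stmt_19 {V : Type*} [NormedAddCommGroup V] [InnerProductSpace ℂ V]
    [FiniteDimensional ℂ V]
    {k : ℕ} (u v w : Fin k → V)
    (hunz : ∀ i, u i ≠ 0) (hvnz : ∀ i, v i ≠ 0) (hwnz : ∀ i, w i ≠ 0)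
    (huv : ∀ i j, ⟪u i, v j⟫_ℂ = 0)
    (huw : ∀ i j, ⟪u i, w j⟫_ℂ = 0)
    (hvw : ∀ i j, ⟪v i, w j⟫_ℂ = 0)
    (huu : ∀ i j, i ≠ j → ⟪u i, u j⟫_ℂ = 0)
    (hvv : ∀ i j, i ≠ j → ⟪v i, v j⟫_ℂ = 0)
    (hww : ∀ i j, i ≠ j → ⟪w i, w j⟫_ℂ = 0)
    (B : V → V → V)
    (hB : ∀ a b, B a b = ∑ i,
      ((⟪a, u i⟫_ℂ * ⟪b, v i⟫_ℂ) • w i - (⟪a, u i⟫_ℂ * ⟪b, w i⟫_ℂ) • v i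
        - (⟪a, v i⟫_ℂ * ⟪b, u i⟫_ℂ) • w i + (⟪a, v i⟫_ℂ * ⟪b, w i⟫_ℂ) • u i
        + (⟪a, w i⟫_ℂ * ⟪b, u i⟫_ℂ) • v i - (⟪a, w i⟫_ℂ * ⟪b, v i⟫_ℂ) • u i))
    {ι : Type*} [Fintype ι] (e : OrthonormalBasis ι ℂ V)
    (H : V →ₗ[ℂ] V)
    (hH : ∀ x, H x = ∑ r, ∑ s, ⟪B (e r) (e s), x⟫_ℂ • B (e r) (e s)) :
    (∀ x y : V, ⟪H x, y⟫_ℂ = ⟪x, H y⟫_ℂ) ∧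
    (∀ x : V, 0 ≤ (⟪H x, x⟫_ℂ).re ∧ (⟪H x, x⟫_ℂ).im = 0) ∧
    (∀ x y : V, B (H x) y = B x (H y)) := by
  -- derived orthogonality facts
  have hvu : ∀ i j, ⟪v i, u j⟫_ℂ = 0 := fun i j => by
    rw [← inner_conj_symm]; simp [huv]
  have hwu : ∀ i j, ⟪w i, u j⟫_ℂ = 0 := fun i j => by
    rw [← inner_conj_symm]; simp [huw]
  have hwv : ∀ i j, ⟪w i, v j⟫_ℂ = 0 := fun i j => by
    rw [← inner_conj_symm]; simp [hvw]
  -- Part 1: Hermitian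
  have herm : ∀ x y : V, ⟪H x, y⟫_ℂ = ⟪x, H y⟫_ℂ := by
    intro x y
    rw [hH x, hH y]
    simp only [sum_inner, inner_sum, inner_smul_left, inner_smul_right, inner_conj_symm]
    exact Finset.sum_congr rfl fun r _ => Finset.sum_congr rfl fun s _ => by ring
  -- Part 2: positive semidefinite
  have hpsd : ∀ x : V, ⟪H x, x⟫_ℂ =
      ((∑ r, ∑ s, Complex.normSq ⟪B (e r) (e s), x⟫_ℂ : ℝ) : ℂ) := by
    intro x
    rw [hH x]
    simp only [sum_inner, inner_smul_left, ← Complex.normSq_eq_conj_mul_self]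
    push_cast
    rfl
  -- semilinearity in the form of basis expansions
  have hBr : ∀ a p : V, B a p = ∑ s, ⟪p, e s⟫_ℂ • B a (e s) := by
    intro a p
    have hs : ∀ (X : ℂ) (q : V), ∑ s, ⟪p, e s⟫_ℂ * (X * ⟪e s, q⟫_ℂ) = X * ⟪p, q⟫_ℂ := by
      intro X q
      rw [← e.sum_inner_mul_inner p q, Finset.mul_sum]
      exact Finset.sum_congr rfl fun s _ => by ring
    simp only [hB, Finset.smul_sum]
    rw [Finset.sum_comm]
    refine Finset.sum_congr rfl fun i _ => ?_
    simp only [smul_sub, smul_add, smul_smul, Finset.sum_sub_distrib,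
      Finset.sum_add_distrib, ← Finset.sum_smul, hs]
  have hBl : ∀ p b : V, B p b = ∑ r, ⟪p, e r⟫_ℂ • B (e r) b := by
    intro p b
    have hs : ∀ (X : ℂ) (q : V), ∑ r, ⟪p, e r⟫_ℂ * (⟪e r, q⟫_ℂ * X) = ⟪p, q⟫_ℂ * X := by
      intro X q
      rw [← e.sum_inner_mul_inner p q, Finset.sum_mul]
      exact Finset.sum_congr rfl fun s _ => by ring
    simp only [hB, Finset.smul_sum]
    rw [Finset.sum_comm]
    refine Finset.sum_congr rfl fun i _ => ?_
    simp only [smul_sub, smul_add, smul_smul, Finset.sum_sub_distrib,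
      Finset.sum_add_distrib, ← Finset.sum_smul, hs]
  have key : ∀ p q : V, ∑ r, ∑ s, (⟪p, e r⟫_ℂ * ⟪q, e s⟫_ℂ) • B (e r) (e s) = B p q := by
    intro p q
    rw [hBl p q]
    refine Finset.sum_congr rfl fun r _ => ?_
    rw [hBr (e r) q, Finset.smul_sum]
    exact Finset.sum_congr rfl fun s _ => by rw [smul_smul]
  have pull : ∀ (c : ℂ) (p q : V),
      ∑ r, ∑ s, ((⟪p, e r⟫_ℂ * ⟪q, e s⟫_ℂ) * c) • B (e r) (e s) = c • B p q := by
    intro c p q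
    rw [← key p q, Finset.smul_sum]
    refine Finset.sum_congr rfl fun r _ => ?_
    rw [Finset.smul_sum]
    refine Finset.sum_congr rfl fun s _ => ?_
    rw [smul_smul, mul_comm]
  -- values of B on the generating vectors
  have hBvw : ∀ t, B (v t) (w t) = (⟪v t, v t⟫_ℂ * ⟪w t, w t⟫_ℂ) • u t := by
    intro t
    rw [hB, Finset.sum_eq_single t]
    · simp [hvu, hwu, hvw, hwv]
    · intro i _ hit
      simp [hvu, hwu, hvw, hwv, hvv t i (Ne.symm hit), hww t i (Ne.symm hit)]
    · simp
  have hBwv : ∀ t, B (w t) (v t) = -((⟪v t, v t⟫_ℂ * ⟪w t, w t⟫_ℂ) • u t) := by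
    intro t
    rw [hB, Finset.sum_eq_single t]
    · simp [hwu, hvu, hwv, hvw]
      all_goals module
    · intro i _ hit
      simp [hwu, hvu, hwv, hvw, hvv t i (Ne.symm hit), hww t i (Ne.symm hit)]
    · simp
  have hBwu : ∀ t, B (w t) (u t) = (⟪w t, w t⟫_ℂ * ⟪u t, u t⟫_ℂ) • v t := by
    intro t
    rw [hB, Finset.sum_eq_single t]
    · simp [hwu, hwv, hvu, huv, huw]
      all_goals module
    · intro i _ hit
      simp [hwu, hwv, hvu, huv, huw, huu t i (Ne.symm hit), hww t i (Ne.symm hit)]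
    · simp
  have hBuw : ∀ t, B (u t) (w t) = -((⟪w t, w t⟫_ℂ * ⟪u t, u t⟫_ℂ) • v t) := by
    intro t
    rw [hB, Finset.sum_eq_single t]
    · simp [huv, huw, hwu, hwv]
      all_goals module
    · intro i _ hit
      simp [huv, huw, hwu, hwv, huu t i (Ne.symm hit), hww t i (Ne.symm hit)]
    · simp
  have hBuv : ∀ t, B (u t) (v t) = (⟪u t, u t⟫_ℂ * ⟪v t, v t⟫_ℂ) • w t := by
    intro t
    rw [hB, Finset.sum_eq_single t]
    · simp [huv, huw, hvu, hvw]
    · intro i _ hit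
      simp [huv, huw, hvu, hvw, huu t i (Ne.symm hit), hvv t i (Ne.symm hit)]
    · simp
  have hBvu : ∀ t, B (v t) (u t) = -((⟪u t, u t⟫_ℂ * ⟪v t, v t⟫_ℂ) • w t) := by
    intro t
    rw [hB, Finset.sum_eq_single t]
    · simp [hvu, hvw, huv, huw]
      all_goals module
    · intro i _ hit
      simp [hvu, hvw, huv, huw, huu t i (Ne.symm hit), hvv t i (Ne.symm hit)]
    · simp
  -- inner products of B with the generating vectors
  have hinu : ∀ t (a b : V), ⟪B a b, u t⟫_ℂ =
      (⟪v t, a⟫_ℂ * ⟪w t, b⟫_ℂ - ⟪w t, a⟫_ℂ * ⟪v t, b⟫_ℂ) * ⟪u t, u t⟫_ℂ := by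
    intro t a b
    rw [hB, sum_inner, Finset.sum_eq_single t]
    · simp only [inner_sub_left, inner_add_left, inner_smul_left, map_mul,
        inner_conj_symm, hvu, hwu]
      ring
    · intro i _ hit
      simp [inner_sub_left, inner_add_left, inner_smul_left, hvu, hwu,
        huu i t hit]
    · simp
  have hinv : ∀ t (a b : V), ⟪B a b, v t⟫_ℂ =
      (⟪w t, a⟫_ℂ * ⟪u t, b⟫_ℂ - ⟪u t, a⟫_ℂ * ⟪w t, b⟫_ℂ) * ⟪v t, v t⟫_ℂ := by
    intro t a b
    rw [hB, sum_inner, Finset.sum_eq_single t]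
    · simp only [inner_sub_left, inner_add_left, inner_smul_left, map_mul,
        inner_conj_symm, huv, hwv]
      ring
    · intro i _ hit
      simp [inner_sub_left, inner_add_left, inner_smul_left, huv, hwv,
        hvv i t hit]
    · simp
  have hinw : ∀ t (a b : V), ⟪B a b, w t⟫_ℂ =
      (⟪u t, a⟫_ℂ * ⟪v t, b⟫_ℂ - ⟪v t, a⟫_ℂ * ⟪u t, b⟫_ℂ) * ⟪w t, w t⟫_ℂ := by
    intro t a b
    rw [hB, sum_inner, Finset.sum_eq_single t]
    · simp only [inner_sub_left, inner_add_left, inner_smul_left, map_mul,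
        inner_conj_symm, huw, hvw]
      ring
    · intro i _ hit
      simp [inner_sub_left, inner_add_left, inner_smul_left, huw, hvw,
        hww i t hit]
    · simp
  -- H on the generating vectors
  set c : Fin k → ℂ := fun t => 2 * ⟪u t, u t⟫_ℂ * ⟪v t, v t⟫_ℂ * ⟪w t, w t⟫_ℂ with hc
  have hHu : ∀ t, H (u t) = c t • u t := by
    intro t
    rw [hH]
    simp only [hinu, sub_mul, sub_smul, Finset.sum_sub_distrib]
    rw [pull, pull, hBvw, hBwv, hc]
    module
  have hHv : ∀ t, H (v t) = c t • v t := by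
    intro t
    rw [hH]
    simp only [hinv, sub_mul, sub_smul, Finset.sum_sub_distrib]
    rw [pull, pull, hBwu, hBuw, hc]
    module
  have hHw : ∀ t, H (w t) = c t • w t := by
    intro t
    rw [hH]
    simp only [hinw, sub_mul, sub_smul, Finset.sum_sub_distrib]
    rw [pull, pull, hBuv, hBvu, hc]
    module
  -- inner products with H x
  have hcu : ∀ (x : V) t, ⟪H x, u t⟫_ℂ = c t * ⟪x, u t⟫_ℂ := by
    intro x t
    rw [herm, hHu, inner_smul_right]
  have hcv : ∀ (x : V) t, ⟪H x, v t⟫_ℂ = c t * ⟪x, v t⟫_ℂ := by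
    intro x t
    rw [herm, hHv, inner_smul_right]
  have hcw : ∀ (x : V) t, ⟪H x, w t⟫_ℂ = c t * ⟪x, w t⟫_ℂ := by
    intro x t
    rw [herm, hHw, inner_smul_right]
  refine ⟨herm, ?_, ?_⟩
  · intro x
    rw [hpsd x]
    constructor
    · simp only [Complex.ofReal_re]
      exact Finset.sum_nonneg fun r _ => Finset.sum_nonneg fun s _ => Complex.normSq_nonneg _
    · simp
  · intro x y
    rw [hB (H x) y, hB x (H y)]
    refine Finset.sum_congr rfl fun i _ => ?_
    rw [hcu x i, hcv x i, hcw x i, hcu y i, hcv y i, hcw y i]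
    module
end
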